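/- arXiv:2501.14053 — 7 statements merged into one kernel-verified Lean document; each statement's English description precedes it below -/
import Mathlib

section
/- Let Q ≪ P be probability measures with r = dQ/dP, width function w_P(h) = P{r ≥ h}, and quantile (generalized inverse) w_P^{-1}. Then the channel simulation divergence admits the representation D_CS(Q‖P) = log₂(e) · ( -1 + ∫₀^1 (1/p) ∫₀^p w_P^{-1}(v) dv dp ). -/
open MeasureTheory Real Set
open scoped ENNReal


lemma csd_inner_integral {a : ℝ} (ha0 : 0 ≤ a) (ha1 : a ≤ 1) :
    ∫⁻ p in Set.Ioc (0:ℝ) 1, ENNReal.ofReal (1/p) * ENNReal.ofReal (min a p)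
      = ENNReal.ofReal (a - a * Real.log a) := by
  have hmeas : Measurable fun p : ℝ => min a p / p :=
    (measurable_const.min measurable_id).div measurable_id
  have hcong : ∫⁻ p in Set.Ioc (0:ℝ) 1, ENNReal.ofReal (1/p) * ENNReal.ofReal (min a p)
      = ∫⁻ p in Set.Ioc (0:ℝ) 1, ENNReal.ofReal (min a p / p) := by
    refine setLIntegral_congr_fun measurableSet_Ioc (fun p hp => ?_)
    rw [← ENNReal.ofReal_mul (one_div_nonneg.mpr hp.1.le)]
    congr 1
    rw [one_div, inv_mul_eq_div]
  rw [hcong]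
  have hint : IntegrableOn (fun p : ℝ => min a p / p) (Set.Ioc 0 1) := by
    refine Integrable.mono' (integrable_const 1) hmeas.aestronglyMeasurable ?_
    refine (ae_restrict_iff' measurableSet_Ioc).2 (ae_of_all _ fun p hp => ?_)
    rw [Real.norm_eq_abs, abs_div, abs_of_nonneg (le_min ha0 hp.1.le), abs_of_pos hp.1]
    rw [div_le_one hp.1]
    exact min_le_right _ _
  have hnn : 0 ≤ᵐ[volume.restrict (Set.Ioc (0:ℝ) 1)] fun p : ℝ => min a p / p := by
    refine (ae_restrict_iff' measurableSet_Ioc).2 (ae_of_all _ fun p hp => ?_)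
    exact div_nonneg (le_min ha0 hp.1.le) hp.1.le
  rw [← ofReal_integral_eq_lintegral_ofReal hint hnn]
  congr 1
  rcases eq_or_lt_of_le ha0 with h0 | h0
  · rw [← h0]
    simp only [Real.log_zero, mul_zero, sub_zero]
    rw [setIntegral_congr_fun measurableSet_Ioc (g := fun _ => (0:ℝ))
      (fun p hp => by simp [min_eq_left hp.1.le])]
    simp
  · have hsplit : Set.Ioc (0:ℝ) 1 = Set.Ioc 0 a ∪ Set.Ioc a 1 := (Set.Ioc_union_Ioc_eq_Ioc ha0 ha1).symm
    rw [hsplit, setIntegral_union (Set.Ioc_disjoint_Ioc_of_le le_rfl) measurableSet_Ioc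
      (hint.mono_set (by rw [hsplit]; exact Set.subset_union_left))
      (hint.mono_set (by rw [hsplit]; exact Set.subset_union_right))]
    have h1 : ∫ p in Set.Ioc (0:ℝ) a, min a p / p = a := by
      rw [setIntegral_congr_fun measurableSet_Ioc (g := fun _ => (1:ℝ))
        (fun p hp => by rw [min_eq_right hp.2, div_self hp.1.ne'])]
      simp [Real.volume_Ioc, ENNReal.toReal_ofReal ha0, ha0]
    have h2 : ∫ p in Set.Ioc a 1, min a p / p = - (a * Real.log a) := by
      rw [setIntegral_congr_fun measurableSet_Ioc (g := fun p => a * (1/p))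
        (fun p hp => by rw [min_eq_left hp.1.le]; ring)]
      rw [← intervalIntegral.integral_of_le ha1, intervalIntegral.integral_const_mul,
        integral_one_div (by
          intro h; rw [Set.mem_uIcc] at h
          rcases h with ⟨h, _⟩ | ⟨_, h⟩ <;> linarith)]
      rw [Real.log_div one_ne_zero h0.ne', Real.log_one]
      ring
    rw [h1, h2]; ring

/-- Integral representation of the channel simulation divergence via the generalized
inverse (quantile) of the width function:
`D_CS(Q‖P) = log₂(e) · (-1 + ∫₀¹ (1/p) ∫₀^p w_P⁻¹(v) dv dp)`. -/
theorem csd_quantile_representation {α : Type*} [MeasurableSpace α]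
    (P Q : Measure α) [IsProbabilityMeasure P] [IsProbabilityMeasure Q]
    (hQP : Q ≪ P)
    (r : α → ℝ) (hr : r = fun x => (Q.rnDeriv P x).toReal)
    (w : ℝ → ℝ) (hw : w = fun h => (P {x | h ≤ r x}).toReal)
    (winv : ℝ → ℝ) (hwinv : winv = fun p => sInf {h : ℝ | 0 ≤ h ∧ w h ≤ p})
    -- the channel simulation divergence is assumed finite
    (hCS : IntegrableOn (fun h => w h * logb 2 (w h)) (Set.Ioi (0 : ℝ))) :
    (-∫ h in Set.Ioi (0 : ℝ), w h * logb 2 (w h))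
      = logb 2 (Real.exp 1) *
        (-1 + ∫ p in Set.Ioc (0 : ℝ) 1, (1 / p) * ∫ v in Set.Ioc (0 : ℝ) p, winv v) := by
  have hrm : Measurable r := by rw [hr]; exact (Measure.measurable_rnDeriv Q P).ennreal_toReal
  have hr0 : ∀ x, 0 ≤ r x := by rw [hr]; exact fun x => ENNReal.toReal_nonneg
  have hSm : ∀ h : ℝ, MeasurableSet {x | h ≤ r x} := fun h => measurableSet_le measurable_const hrm
  have hPne : ∀ h : ℝ, P {x | h ≤ r x} ≠ ⊤ := fun h => (measure_lt_top P _).ne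
  have hwnn : ∀ h, 0 ≤ w h := by rw [hw]; exact fun h => ENNReal.toReal_nonneg
  have hwle1 : ∀ h, w h ≤ 1 := by
    rw [hw]; intro h
    simpa using ENNReal.toReal_mono (by simp) (prob_le_one (μ := P) (s := {x | h ≤ r x}))
  have hwanti : Antitone w := by
    rw [hw]; intro h1 h2 h12
    exact ENNReal.toReal_mono (hPne h1) (measure_mono fun x hx => le_trans h12 hx)
  have hofw : ∀ h, ENNReal.ofReal (w h) = P {x | h ≤ r x} := by
    rw [hw]; exact fun h => ENNReal.ofReal_toReal (hPne h)
  -- the set family continuity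
  have hiInf : ∀ t : ℝ, ∀ s : ℕ → ℝ, Monotone s → (∀ n, s n ≤ t) → Filter.Tendsto s Filter.atTop (nhds t) →
      P {x | t ≤ r x} = ⨅ n, P {x | s n ≤ r x} := by
    intro t s hmono hle htend
    have hset : ⋂ n, {x | s n ≤ r x} = {x | t ≤ r x} := by
      ext x; simp only [Set.mem_iInter, Set.mem_setOf_eq]
      constructor
      · intro h
        exact le_of_tendsto htend (Filter.Eventually.of_forall h)
      · intro h n; exact (hle n).trans h
    rw [← hset]
    refine Directed.measure_iInter (fun n => (hSm _).nullMeasurableSet) ?_ ⟨0, hPne _⟩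
    intro m n
    rcases le_total m n with hmn | hmn
    · exact ⟨n, fun x hx => le_trans (hmono hmn) hx, fun x hx => hx⟩
    · exact ⟨m, fun x hx => hx, fun x hx => le_trans (hmono hmn) hx⟩
  -- nonemptiness of the quantile sets
  have hne : ∀ v : ℝ, 0 < v → {h : ℝ | 0 ≤ h ∧ w h ≤ v}.Nonempty := by
    intro v hv
    have hempty : ⋂ (n : ℕ), {x | (n:ℝ) ≤ r x} = (∅ : Set α) := by
      ext x
      simp only [Set.mem_iInter, Set.mem_setOf_eq, Set.mem_empty_iff_false, iff_false, not_forall,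
        not_le]
      obtain ⟨n, hn⟩ := exists_nat_gt (r x)
      exact ⟨n, hn⟩
    have hinf : ⨅ n : ℕ, P {x | (n:ℝ) ≤ r x} = 0 := by
      rw [← Directed.measure_iInter (fun n => (hSm _).nullMeasurableSet) ?_ ⟨0, hPne _⟩, hempty,
        measure_empty]
      intro m n
      rcases le_total m n with hmn | hmn
      · exact ⟨n, fun x hx => show ((m:ℝ)) ≤ r x from le_trans (Nat.cast_le.2 hmn) hx,
          fun x hx => hx⟩
      · exact ⟨m, fun x hx => hx,
          fun x hx => show ((n:ℝ)) ≤ r x from le_trans (Nat.cast_le.2 hmn) hx⟩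
    have : ⨅ n : ℕ, P {x | (n:ℝ) ≤ r x} < ENNReal.ofReal v := by
      rw [hinf]; exact ENNReal.ofReal_pos.2 hv
    obtain ⟨n, hn⟩ := iInf_lt_iff.1 this
    refine ⟨n, Nat.cast_nonneg n, ?_⟩
    have := ENNReal.toReal_lt_of_lt_ofReal hn
    rw [hw]
    exact this.le
  -- left continuity consequence
  have hleft : ∀ t v : ℝ, 0 < t → w t < v → winv v < t := by
    intro t v ht hv
    have hv0 : 0 < v := lt_of_le_of_lt (hwnn t) hv
    set s : ℕ → ℝ := fun n => t - 1/(n+1) with hs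
    have hsmono : Monotone s := by
      intro m n hmn
      have : (1:ℝ)/(n+1) ≤ 1/(m+1) := by
        apply one_div_le_one_div_of_le (by positivity)
        exact_mod_cast by omega
      simp only [hs]; linarith
    have hsle : ∀ n, s n ≤ t := fun n => by
      simp only [hs]; have : (0:ℝ) < 1/(n+1) := by positivity
      linarith
    have hstend : Filter.Tendsto s Filter.atTop (nhds t) := by
      have h1 : Filter.Tendsto (fun n : ℕ => 1/((n:ℝ)+1)) Filter.atTop (nhds 0) := by
        have := (tendsto_one_div_atTop_nhds_zero_nat (𝕜 := ℝ)).comp (Filter.tendsto_add_atTop_nat 1)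
        simpa [Function.comp_def] using this
      rw [hs]
      have := Filter.Tendsto.const_sub t h1
      simpa using this
    have hkey := hiInf t s hsmono hsle hstend
    have : ⨅ n, P {x | s n ≤ r x} < ENNReal.ofReal v := by
      rw [← hkey, ← hofw t]
      exact ENNReal.ofReal_lt_ofReal_iff hv0 |>.2 hv
    obtain ⟨n, hn⟩ := iInf_lt_iff.1 this
    obtain ⟨m, hm⟩ := exists_nat_one_div_lt ht
    set N := max n m with hN
    have hwN : w (s N) ≤ v := by
      have hsub : P {x | s N ≤ r x} ≤ P {x | s n ≤ r x} :=
        measure_mono (fun x hx => le_trans (hsmono (le_max_left n m)) hx)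
      have := ENNReal.toReal_lt_of_lt_ofReal (lt_of_le_of_lt hsub hn)
      rw [hw]; exact this.le
    have hsN0 : 0 ≤ s N := by
      have : (1:ℝ)/(N+1) ≤ 1/(m+1) := by
        apply one_div_le_one_div_of_le (by positivity)
        have := le_max_right n m
        exact_mod_cast by omega
      simp only [hs]; linarith
    have hmem : s N ∈ {h : ℝ | 0 ≤ h ∧ w h ≤ v} := ⟨hsN0, hwN⟩
    have hlt : s N < t := by
      simp only [hs]; have : (0:ℝ) < 1/(N+1) := by positivity
      linarith
    calc winv v ≤ s N := by
          rw [hwinv]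
          exact csInf_le ⟨0, fun x hx => hx.1⟩ hmem
      _ < t := hlt
  -- lower bound property
  have hb : ∀ v t : ℝ, 0 < v → 0 ≤ t → v < w t → t ≤ winv v := by
    intro v t hv ht hvw
    rw [hwinv]
    refine le_csInf (hne v hv) fun b hb => ?_
    by_contra hbt
    push_neg at hbt
    have := hwanti hbt.le
    have := hb.2
    linarith
  have hwinv_nn : ∀ v, 0 ≤ winv v := by
    rw [hwinv]; exact fun v => Real.sInf_nonneg (fun x hx => hx.1)
  have hwinv_anti : AntitoneOn winv (Set.Ioi (0:ℝ)) := by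
    intro v1 hv1 v2 hv2 h12
    rw [hwinv]
    exact csInf_le_csInf ⟨0, fun x hx => hx.1⟩ (hne v1 hv1) (fun x hx => ⟨hx.1, hx.2.trans h12⟩)
  -- Step A : total mass
  have hA : ∫⁻ t in Set.Ioi (0:ℝ), P {x | t ≤ r x} = 1 := by
    rw [← lintegral_eq_lintegral_meas_le P (ae_of_all _ hr0) hrm.aemeasurable]
    have hae : (fun x => ENNReal.ofReal (r x)) =ᵐ[P] fun x => Q.rnDeriv P x := by
      filter_upwards [Measure.rnDeriv_ne_top Q P] with x hx
      rw [hr]; exact ENNReal.ofReal_toReal hx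
    rw [lintegral_congr_ae hae, Measure.lintegral_rnDeriv hQP, measure_univ]
  have hAw : ∫⁻ t in Set.Ioi (0:ℝ), ENNReal.ofReal (w t) = 1 := by
    simp_rw [hofw]; exact hA
  have hw_meas : Measurable w := hwanti.measurable
  have hw_int : IntegrableOn w (Set.Ioi (0:ℝ)) :=
    ⟨hw_meas.aestronglyMeasurable.restrict,
      (hasFiniteIntegral_iff_ofReal (ae_of_all _ hwnn)).2 (by rw [hAw]; exact ENNReal.one_lt_top)⟩
  have hI1 : ∫ t in Set.Ioi (0:ℝ), w t = 1 := by
    rw [integral_eq_lintegral_of_nonneg_ae (ae_of_all _ hwnn)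
      hw_meas.aestronglyMeasurable.restrict, hAw, ENNReal.toReal_one]
  -- quantile slice measure
  have hQvol : ∀ t p : ℝ, 0 < t → 0 < p →
      volume ({v : ℝ | t ≤ winv v} ∩ Set.Ioc 0 p) = ENNReal.ofReal (min (w t) p) := by
    intro t p ht hp
    apply le_antisymm
    · have hsub : {v : ℝ | t ≤ winv v} ∩ Set.Ioc 0 p ⊆ Set.Ioc 0 (min (w t) p) := by
        rintro v ⟨hv, hv0, hvp⟩
        refine ⟨hv0, le_min ?_ hvp⟩
        by_contra hvw
        push_neg at hvw
        exact absurd (hleft t v ht hvw) (not_lt.2 hv)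
      calc volume ({v : ℝ | t ≤ winv v} ∩ Set.Ioc 0 p) ≤ volume (Set.Ioc 0 (min (w t) p)) :=
            measure_mono hsub
        _ = ENNReal.ofReal (min (w t) p) := by rw [Real.volume_Ioc, sub_zero]
    · have hsub : Set.Ioo 0 (min (w t) p) ⊆ {v : ℝ | t ≤ winv v} ∩ Set.Ioc 0 p := by
        rintro v ⟨hv0, hvlt⟩
        exact ⟨hb v t hv0 ht.le (hvlt.trans_le (min_le_left _ _)),
          hv0, (hvlt.trans_le (min_le_right _ _)).le⟩
      calc ENNReal.ofReal (min (w t) p) = volume (Set.Ioo 0 (min (w t) p)) := by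
            rw [Real.volume_Ioo, sub_zero]
        _ ≤ volume ({v : ℝ | t ≤ winv v} ∩ Set.Ioc 0 p) := measure_mono hsub
  -- layer cake for the quantile
  have hwinv_meas : ∀ p : ℝ, AEMeasurable winv (volume.restrict (Set.Ioc (0:ℝ) p)) := fun p =>
    aemeasurable_restrict_of_antitoneOn measurableSet_Ioc (hwinv_anti.mono (fun v hv => hv.1))
  have hQlint : ∀ p : ℝ, 0 < p →
      ∫⁻ v in Set.Ioc (0:ℝ) p, ENNReal.ofReal (winv v)
        = ∫⁻ t in Set.Ioi (0:ℝ), ENNReal.ofReal (min (w t) p) := by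
    intro p hp
    rw [lintegral_eq_lintegral_meas_le (volume.restrict (Set.Ioc 0 p))
      (ae_of_all _ hwinv_nn) (hwinv_meas p)]
    refine setLIntegral_congr_fun measurableSet_Ioi (fun t ht => ?_)
    rw [Measure.restrict_apply' measurableSet_Ioc, hQvol t p ht hp]
  -- M and Tonelli
  set M : ℝ → ℝ≥0∞ := fun p => ∫⁻ t in Set.Ioi (0:ℝ), ENNReal.ofReal (min (w t) p) with hM
  have hMmono : Monotone M := fun p1 p2 h12 =>
    lintegral_mono fun t => ENNReal.ofReal_le_ofReal (min_le_min le_rfl h12)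
  have hMle : ∀ p, M p ≤ 1 := fun p => by
    rw [← hAw]
    exact lintegral_mono fun t => ENNReal.ofReal_le_ofReal (min_le_left _ _)
  have hMne : ∀ p, M p ≠ ⊤ := fun p => (lt_of_le_of_lt (hMle p) ENNReal.one_lt_top).ne
  have hMmeas : Measurable M := hMmono.measurable
  have hum : Measurable (Function.uncurry fun p t : ℝ =>
      ENNReal.ofReal (1/p) * ENNReal.ofReal (min (w t) p)) := by
    refine Measurable.fun_mul (f := fun q : ℝ × ℝ => ENNReal.ofReal (1/q.1))
      (g := fun q : ℝ × ℝ => ENNReal.ofReal (min (w q.2) q.1)) ?_ ?_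
    · exact ENNReal.measurable_ofReal.comp (measurable_const.div measurable_fst)
    · exact ENNReal.measurable_ofReal.comp ((hw_meas.comp measurable_snd).min measurable_fst)
  have hswap : ∫⁻ p in Set.Ioc (0:ℝ) 1, ENNReal.ofReal (1/p) * M p
      = ∫⁻ t in Set.Ioi (0:ℝ), ENNReal.ofReal (w t - w t * Real.log (w t)) := by
    have h1 : ∀ p ∈ Set.Ioc (0:ℝ) 1, ENNReal.ofReal (1/p) * M p
        = ∫⁻ t in Set.Ioi (0:ℝ), ENNReal.ofReal (1/p) * ENNReal.ofReal (min (w t) p) :=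
      fun p _ => (lintegral_const_mul' _ _ ENNReal.ofReal_ne_top).symm
    rw [setLIntegral_congr_fun measurableSet_Ioc h1,
      lintegral_lintegral_swap hum.aemeasurable]
    refine setLIntegral_congr_fun measurableSet_Ioi (fun t _ => ?_)
    exact csd_inner_integral (hwnn t) (hwle1 t)
  -- integrability of w log w
  have hlog2 : Real.log 2 ≠ 0 := (Real.log_pos one_lt_two).ne'
  have hI2int : IntegrableOn (fun t => w t * Real.log (w t)) (Set.Ioi (0:ℝ)) := by
    have heq : (fun t => w t * Real.log (w t))
        = fun t => Real.log 2 * (w t * Real.logb 2 (w t)) := by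
      funext t; rw [Real.logb]; field_simp
    rw [heq]
    exact hCS.const_mul _
  have hsubnn : ∀ t, 0 ≤ w t - w t * Real.log (w t) := fun t => by
    have hlog : Real.log (w t) ≤ 0 := Real.log_nonpos (hwnn t) (hwle1 t)
    nlinarith [hwnn t]
  set I2 := ∫ t in Set.Ioi (0:ℝ), w t * Real.log (w t) with hI2
  have hI2np : I2 ≤ 0 := by
    refine integral_nonpos_of_ae (ae_of_all _ fun t => ?_)
    simp only [Pi.zero_apply]
    nlinarith [hwnn t, Real.log_nonpos (hwnn t) (hwle1 t)]
  have hL : ∫⁻ t in Set.Ioi (0:ℝ), ENNReal.ofReal (w t - w t * Real.log (w t))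
      = ENNReal.ofReal (1 - I2) := by
    have hsint : IntegrableOn (fun t => w t - w t * Real.log (w t)) (Set.Ioi (0:ℝ)) :=
      hw_int.sub hI2int
    rw [← ofReal_integral_eq_lintegral_ofReal hsint
      (ae_of_all _ fun t => hsubnn t), integral_sub hw_int hI2int, hI1]
  -- Bochner conversions
  have hBp : ∀ p : ℝ, 0 < p → ∫ v in Set.Ioc (0:ℝ) p, winv v = (M p).toReal := by
    intro p hp
    rw [integral_eq_lintegral_of_nonneg_ae (ae_of_all _ hwinv_nn)
      (hwinv_meas p).aestronglyMeasurable, hQlint p hp]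
  have houter : ∫ p in Set.Ioc (0:ℝ) 1, (1/p) * ∫ v in Set.Ioc (0:ℝ) p, winv v = 1 - I2 := by
    have hFm : AEStronglyMeasurable (fun p : ℝ => (1/p) * ∫ v in Set.Ioc (0:ℝ) p, winv v)
        (volume.restrict (Set.Ioc (0:ℝ) 1)) := by
      refine AEStronglyMeasurable.congr (f := fun p : ℝ => (1/p) * (M p).toReal) ?_ ?_
      · exact ((measurable_const.div measurable_id).mul
          hMmeas.ennreal_toReal).aestronglyMeasurable
      · exact (ae_restrict_iff' measurableSet_Ioc).2
          (ae_of_all _ fun p hp => by simp only [hBp p hp.1])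
    have hFnn : 0 ≤ᵐ[volume.restrict (Set.Ioc (0:ℝ) 1)]
        fun p : ℝ => (1/p) * ∫ v in Set.Ioc (0:ℝ) p, winv v := by
      refine (ae_restrict_iff' measurableSet_Ioc).2 (ae_of_all _ fun p hp => ?_)
      have hBnn : 0 ≤ ∫ v in Set.Ioc (0:ℝ) p, winv v :=
        setIntegral_nonneg measurableSet_Ioc fun v _ => hwinv_nn v
      have := hp.1
      positivity
    rw [integral_eq_lintegral_of_nonneg_ae hFnn hFm]
    have hlcong : ∫⁻ p in Set.Ioc (0:ℝ) 1,
        ENNReal.ofReal ((1/p) * ∫ v in Set.Ioc (0:ℝ) p, winv v)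
        = ∫⁻ p in Set.Ioc (0:ℝ) 1, ENNReal.ofReal (1/p) * M p := by
      refine setLIntegral_congr_fun measurableSet_Ioc (fun p hp => ?_)
      rw [hBp p hp.1, ENNReal.ofReal_mul (one_div_nonneg.2 hp.1.le),
        ENNReal.ofReal_toReal (hMne p)]
    rw [hlcong, hswap, hL, ENNReal.toReal_ofReal (by linarith)]
  -- final assembly
  have hgoal1 : ∫ h in Set.Ioi (0:ℝ), w h * Real.logb 2 (w h) = I2 * (Real.log 2)⁻¹ := by
    rw [hI2, ← integral_mul_const]
    refine integral_congr_ae (ae_of_all _ fun t => ?_)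
    simp only [Real.logb, div_eq_mul_inv, ← mul_assoc]
  rw [hgoal1, houter]
  simp only [Real.logb, Real.log_exp]
  field_simp
  ring
end

section
/- Let Q ≪ P be probability measures with r = dQ/dP and w_P(h) = P{r ≥ h}. Then the Kullback–Leibler divergence in bits satisfies D_KL(Q‖P) = log₂(e) + ∫₀^∞ w_P(h) · log₂(h) dh, assuming D_KL(Q‖P) is finite. -/
open MeasureTheory Real

open Set


-- integrability of log on (0, a]
lemma integrableOn_log_Ioc (a : ℝ) : IntegrableOn Real.log (Ioc 0 a) volume := by
  rcases le_or_gt a 0 with ha | ha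
  · rw [Ioc_eq_empty (by simpa using ha)]; exact integrableOn_empty
  · have hg : IntegrableOn (fun x : ℝ => 2 * x ^ (-(1/2) : ℝ) + x) (Ioc 0 a) volume := by
      apply Integrable.add
      · have hrp : IntervalIntegrable (fun x : ℝ => x ^ (-(1/2) : ℝ)) volume 0 a :=
          intervalIntegral.intervalIntegrable_rpow' (by norm_num)
        exact hrp.1.const_mul 2
      · exact (continuous_id.integrableOn_Icc (μ := volume) (a := 0) (b := a)).mono_set
          Ioc_subset_Icc_self
    refine Integrable.mono' hg Real.measurable_log.aestronglyMeasurable ?_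
    refine (ae_restrict_iff' measurableSet_Ioc).2 (ae_of_all _ fun x hx => ?_)
    obtain ⟨hx0, _⟩ := hx
    rcases le_or_gt x 1 with hx1 | hx1
    · have h1 : ‖Real.log x‖ = -Real.log x := by
        rw [Real.norm_eq_abs, abs_of_nonpos (Real.log_nonpos hx0.le hx1)]
      have h2 : -Real.log x = 2 * Real.log (x ^ (-(1/2) : ℝ)) := by
        rw [Real.log_rpow hx0]; ring
      have h3 : Real.log (x ^ (-(1/2) : ℝ)) ≤ x ^ (-(1/2) : ℝ) := by
        have := Real.add_one_le_exp (Real.log (x ^ (-(1/2) : ℝ)))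
        nlinarith [Real.exp_log (Real.rpow_pos_of_pos hx0 (-(1/2))), Real.log_le_sub_one_of_pos (Real.rpow_pos_of_pos hx0 (-(1/2)))]
      rw [h1, h2]
      nlinarith
    · have h1 : ‖Real.log x‖ = Real.log x := by
        rw [Real.norm_eq_abs, abs_of_nonneg (Real.log_nonneg hx1.le)]
      have h3 : Real.log x ≤ x - 1 := Real.log_le_sub_one_of_pos (by linarith)
      have h4 : (0:ℝ) ≤ 2 * x ^ (-(1/2) : ℝ) := by positivity
      rw [h1]; linarith

-- value of ∫ log on (0, a]
lemma integral_log_Ioc {a : ℝ} (ha : 0 ≤ a) :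
    ∫ h in Ioc 0 a, Real.log h = a * Real.log a - a := by
  rcases eq_or_lt_of_le ha with rfl | ha
  · simp
  · have h := intervalIntegral.integral_eq_sub_of_hasDerivAt_of_le (f := fun x => x * Real.log x - x)
      (f' := Real.log) ha.le
      ((Real.continuous_mul_log.sub continuous_id).continuousOn)
      (fun x hx => by
        exact ((Real.hasDerivAt_mul_log hx.1.ne').sub (hasDerivAt_id' x)).congr_deriv (by ring))
      ⟨integrableOn_log_Ioc a, by rw [Ioc_eq_empty (by simpa using ha.le)]; exact integrableOn_empty⟩
    rw [intervalIntegral.integral_of_le ha.le] at h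
    simpa using h

-- bound on ∫ |log| on (0, a]
lemma integral_abs_log_Ioc_le {a : ℝ} (ha : 0 ≤ a) :
    ∫ h in Ioc 0 a, |Real.log h| ≤ 2 + a * |Real.log a| + a := by
  rcases le_or_gt a 1 with ha1 | ha1
  · have : ∫ h in Ioc 0 a, |Real.log h| = ∫ h in Ioc 0 a, -Real.log h := by
      refine setIntegral_congr_fun measurableSet_Ioc fun x hx => ?_
      exact abs_of_nonpos (Real.log_nonpos hx.1.le (hx.2.trans ha1))
    rw [this, integral_neg, integral_log_Ioc ha]
    nlinarith [abs_nonneg (Real.log a), neg_abs_le (Real.log a), (le_abs_self (Real.log a))]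
  · have hsplit : Ioc (0:ℝ) a = Ioc 0 1 ∪ Ioc 1 a := (Ioc_union_Ioc_eq_Ioc (by norm_num) ha1.le).symm
    have hdisj : Disjoint (Ioc (0:ℝ) 1) (Ioc 1 a) := by
      simp [Set.disjoint_left]
      intro x _ hx1 hx1'
      linarith
    have hint1 : IntegrableOn (fun h => |Real.log h|) (Ioc 0 1) volume :=
      (integrableOn_log_Ioc 1).abs
    have hint2 : IntegrableOn (fun h => |Real.log h|) (Ioc 1 a) volume :=
      (((integrableOn_log_Ioc a).mono_set (Ioc_subset_Ioc_left (by norm_num)))).abs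
    rw [hsplit, setIntegral_union hdisj measurableSet_Ioc hint1 hint2]
    have e1 : ∫ h in Ioc (0:ℝ) 1, |Real.log h| = 1 := by
      have : ∫ h in Ioc (0:ℝ) 1, |Real.log h| = ∫ h in Ioc (0:ℝ) 1, -Real.log h := by
        refine setIntegral_congr_fun measurableSet_Ioc fun x hx => ?_
        exact abs_of_nonpos (Real.log_nonpos hx.1.le hx.2)
      rw [this, integral_neg, integral_log_Ioc (by norm_num)]
      simp
    have e2 : ∫ h in Ioc (1:ℝ) a, |Real.log h| = a * Real.log a - a + 1 := by
      have h1 : ∫ h in Ioc (1:ℝ) a, |Real.log h| = ∫ h in Ioc (1:ℝ) a, Real.log h := by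
        refine setIntegral_congr_fun measurableSet_Ioc fun x hx => ?_
        exact abs_of_nonneg (Real.log_nonneg hx.1.le)
      have h2 : ∫ h in Ioc (0:ℝ) a, Real.log h
          = (∫ h in Ioc (0:ℝ) 1, Real.log h) + ∫ h in Ioc (1:ℝ) a, Real.log h := by
        rw [hsplit]
        exact setIntegral_union hdisj measurableSet_Ioc (integrableOn_log_Ioc 1)
          ((integrableOn_log_Ioc a).mono_set (Ioc_subset_Ioc_left (by norm_num)))
      rw [h1]
      have := integral_log_Ioc ha
      have h3 := integral_log_Ioc (le_refl 0 |>.trans (by norm_num : (0:ℝ) ≤ 1))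
      rw [h2] at this
      simp at h3
      rw [h3] at this
      linarith
    rw [e1, e2]
    nlinarith [le_abs_self (Real.log a), abs_nonneg (Real.log a)]

/-- Integral representation of the KL divergence (in bits) via the width function:
`D_KL(Q‖P) = log₂(e) + ∫₀^∞ w_P(h) log₂(h) dh`, assuming `D_KL(Q‖P)` is finite. -/
theorem kl_width_representation {α : Type*} [MeasurableSpace α]
    (P Q : Measure α) [IsProbabilityMeasure P] [IsProbabilityMeasure Q]
    (hQP : Q ≪ P)
    (r : α → ℝ) (hr : r = fun x => (Q.rnDeriv P x).toReal)
    (w : ℝ → ℝ) (hw : w = fun h => (P {x | h ≤ r x}).toReal)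
    -- `D_KL(Q‖P)` is finite
    (hKL : Integrable (fun x => logb 2 (r x)) Q) :
    ∫ x, logb 2 (r x) ∂Q
      = logb 2 (Real.exp 1) + ∫ h in Set.Ioi (0 : ℝ), w h * logb 2 h := by
  have hlog2 : Real.log 2 ≠ 0 := by
    exact ne_of_gt (Real.log_pos one_lt_two)
  have hrm : Measurable r := by
    rw [hr]; exact (Measure.measurable_rnDeriv Q P).ennreal_toReal
  have hr0 : ∀ x, 0 ≤ r x := by rw [hr]; intro x; exact ENNReal.toReal_nonneg
  -- integrability of log r w.r.t. Q
  have hlogQ : Integrable (fun x => Real.log (r x)) Q := by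
    have := hKL.mul_const (Real.log 2)
    refine this.congr (ae_of_all _ fun x => ?_)
    simp only [Real.logb]
    rw [div_mul_cancel₀ _ hlog2]
  -- transfer to P
  have key1 : ∫ x, r x * Real.log (r x) ∂P = ∫ x, Real.log (r x) ∂Q := by
    have := integral_rnDeriv_smul (E := ℝ) hQP (f := fun x => Real.log (r x))
    simpa [hr, smul_eq_mul] using this
  have key_int2 : Integrable (fun x => r x * Real.log (r x)) P := by
    have := (integrable_rnDeriv_smul_iff (E := ℝ) hQP
      (f := fun x => Real.log (r x))).2 hlogQ
    simpa [hr, smul_eq_mul] using this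
  have key_int1 : Integrable r P := by
    rw [hr]; exact Measure.integrable_toReal_rnDeriv
  have key2 : ∫ x, r x ∂P = 1 := by
    rw [hr, Measure.integral_toReal_rnDeriv hQP]
    simp
  -- the product function
  set F : α × ℝ → ℝ :=
    fun p => Set.indicator {p : α × ℝ | p.2 ≤ r p.1} (fun q => Real.log q.2) p with hF
  have hsF : MeasurableSet {p : α × ℝ | p.2 ≤ r p.1} :=
    measurableSet_le measurable_snd (hrm.comp measurable_fst)
  have hFm : Measurable F := (Real.measurable_log.comp measurable_snd).indicator hsF
  have hcurry : ∀ x : α, (fun h => F (x, h)) = Set.indicator (Iic (r x)) Real.log := by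
    intro x; funext h
    by_cases hh : h ≤ r x <;> simp [hF, Set.indicator, hh]
  -- integrability of each slice
  have hslice : ∀ x : α, Integrable (fun h => F (x, h)) (volume.restrict (Ioi 0)) := by
    intro x
    rw [hcurry x, integrable_indicator_iff measurableSet_Iic]
    rw [IntegrableOn, Measure.restrict_restrict measurableSet_Iic, Iic_inter_Ioi]
    exact integrableOn_log_Ioc (r x)
  -- slice integral values
  have hslice_val : ∀ x : α,
      ∫ h in Ioi (0:ℝ), F (x, h) = r x * Real.log (r x) - r x := by
    intro x
    rw [hcurry x, integral_indicator measurableSet_Iic,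
      Measure.restrict_restrict measurableSet_Iic, Iic_inter_Ioi,
      integral_log_Ioc (hr0 x)]
  have hslice_norm : ∀ x : α,
      ∫ h in Ioi (0:ℝ), ‖F (x, h)‖ ≤ 2 + r x * |Real.log (r x)| + r x := by
    intro x
    have : (fun h => ‖F (x, h)‖) = Set.indicator (Iic (r x)) (fun h => |Real.log h|) := by
      funext h
      by_cases hh : h ≤ r x <;> simp [hF, Set.indicator, hh]
    rw [this, integral_indicator measurableSet_Iic,
      Measure.restrict_restrict measurableSet_Iic, Iic_inter_Ioi]
    exact integral_abs_log_Ioc_le (hr0 x)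
  -- integrability on the product
  have hFint : Integrable F (P.prod (volume.restrict (Ioi 0))) := by
    refine (integrable_prod_iff hFm.aestronglyMeasurable).2 ⟨ae_of_all _ hslice, ?_⟩
    have hbound : Integrable (fun x => 2 + r x * |Real.log (r x)| + r x) P := by
      refine (Integrable.add ((integrable_const 2).add ?_) key_int1)
      refine key_int2.abs.congr (ae_of_all _ fun x => ?_)
      show |r x * Real.log (r x)| = r x * |Real.log (r x)|
      rw [abs_mul, abs_of_nonneg (hr0 x)]
    refine Integrable.mono' hbound
      (hFm.aestronglyMeasurable.norm.integral_prod_right') (ae_of_all _ fun x => ?_)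
    rw [Real.norm_eq_abs, abs_of_nonneg (integral_nonneg fun h => norm_nonneg _)]
    exact hslice_norm x
  -- Fubini
  have hfub : ∫ x, (∫ h in Ioi (0:ℝ), F (x, h)) ∂P
      = ∫ h in Ioi (0:ℝ), (∫ x, F (x, h) ∂P) := integral_integral_swap hFint
  -- compute the left side
  have hleft : ∫ x, (∫ h in Ioi (0:ℝ), F (x, h)) ∂P
      = (∫ x, Real.log (r x) ∂Q) - 1 := by
    calc ∫ x, (∫ h in Ioi (0:ℝ), F (x, h)) ∂P
        = ∫ x, (r x * Real.log (r x) - r x) ∂P := by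
          exact integral_congr_ae (ae_of_all _ fun x => hslice_val x)
      _ = (∫ x, r x * Real.log (r x) ∂P) - ∫ x, r x ∂P := integral_sub key_int2 key_int1
      _ = (∫ x, Real.log (r x) ∂Q) - 1 := by rw [key1, key2]
  -- compute the right side
  have hright : ∫ h in Ioi (0:ℝ), (∫ x, F (x, h) ∂P) = ∫ h in Ioi (0:ℝ), w h * Real.log h := by
    refine setIntegral_congr_fun measurableSet_Ioi fun h _ => ?_
    have : (fun x => F (x, h)) = Set.indicator {x | h ≤ r x} (fun _ => Real.log h) := by
      funext x
      by_cases hh : h ≤ r x <;> simp [hF, Set.indicator, hh]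
    rw [this, integral_indicator_const _ (measurableSet_le measurable_const hrm), hw]
    simp [smul_eq_mul, mul_comm, measureReal_def]
  have main : (∫ x, Real.log (r x) ∂Q) - 1 = ∫ h in Ioi (0:ℝ), w h * Real.log h := by
    rw [← hleft, hfub, hright]
  -- convert to logb
  have hQconv : ∫ x, logb 2 (r x) ∂Q = (∫ x, Real.log (r x) ∂Q) / Real.log 2 := by
    rw [← integral_div]
    exact integral_congr_ae (ae_of_all _ fun x => rfl)
  have hWconv : ∫ h in Ioi (0:ℝ), w h * logb 2 h
      = (∫ h in Ioi (0:ℝ), w h * Real.log h) / Real.log 2 := by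
    rw [← integral_div]
    refine setIntegral_congr_fun measurableSet_Ioi fun h _ => ?_
    simp only [Real.logb]
    rw [mul_div_assoc]
  rw [hQconv, hWconv, ← main]
  simp only [Real.logb, Real.log_exp]
  field_simp
  ring
end

section
/- Let φ(x) = -x·log₂ x on [0,1] (with φ(0)=0), and let V be a random variable on [0,1] with mean μ = E[V]. Then E[φ(V)] = log₂(e) · ( 1 - μ - ∫₀^1 ∫₀^u (1/u) · P[V ≤ v] dv du ). -/
open MeasureTheory Real

lemma aux_psi_nonneg {x : ℝ} (hx : x ∈ Set.Icc (0:ℝ) 1) : 0 ≤ 1 - x + x * Real.log x := by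
  rcases eq_or_lt_of_le hx.1 with h0 | hxpos
  · rw [← h0]; simp
  · have h1 : Real.log (1/x) ≤ 1/x - 1 := Real.log_le_sub_one_of_pos (by positivity)
    rw [one_div, Real.log_inv] at h1
    have h2 := mul_le_mul_of_nonneg_left h1 hxpos.le
    have h4 : x * x⁻¹ = 1 := mul_inv_cancel₀ hxpos.ne'
    nlinarith [h2, h4]

lemma aux_xlogx_bounds {x : ℝ} (hx : x ∈ Set.Icc (0:ℝ) 1) : ‖x * Real.log x‖ ≤ 1 := by
  rcases eq_or_lt_of_le hx.1 with h0 | hxpos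
  · rw [← h0]; simp
  · have hle : x * Real.log x ≤ 0 :=
      mul_nonpos_of_nonneg_of_nonpos hx.1 (Real.log_nonpos hx.1 hx.2)
    have h1 : Real.log (1/x) ≤ 1/x - 1 := Real.log_le_sub_one_of_pos (by positivity)
    rw [one_div, Real.log_inv] at h1
    have h2 := mul_le_mul_of_nonneg_left h1 hxpos.le
    have h4 : x * x⁻¹ = 1 := mul_inv_cancel₀ hxpos.ne'
    rw [Real.norm_eq_abs, abs_le]
    constructor <;> nlinarith [h2, h4]

lemma aux_inner_u {x : ℝ} (hx : x ∈ Set.Icc (0:ℝ) 1) :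
    ∫⁻ u in Set.Ioc (0:ℝ) 1, ENNReal.ofReal ((1/u) * max (u - x) 0)
      = ENNReal.ofReal (1 - x + x * Real.log x) := by
  rcases eq_or_lt_of_le hx.1 with h0 | hxpos
  · have h1 : ∀ u ∈ Set.Ioc (0:ℝ) 1, ENNReal.ofReal ((1/u) * max (u - x) 0) = 1 := by
      intro u hu
      rw [← h0, sub_zero, max_eq_left hu.1.le, one_div, inv_mul_cancel₀ (ne_of_gt hu.1)]
      simp
    rw [setLIntegral_congr_fun measurableSet_Ioc h1]
    simp [Real.volume_Ioc, ← h0]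
  · have hx1 : x ≤ 1 := hx.2
    have hsplit : Set.Ioc (0:ℝ) x ∪ Set.Ioc x 1 = Set.Ioc (0:ℝ) 1 :=
      Set.Ioc_union_Ioc_eq_Ioc hx.1 hx1
    have hmeas : MeasurableSet (Set.Ioc x (1:ℝ)) := measurableSet_Ioc
    have hdisj : Disjoint (Set.Ioc (0:ℝ) x) (Set.Ioc x 1) := Set.Ioc_disjoint_Ioc_of_le le_rfl
    rw [← hsplit, lintegral_union hmeas hdisj]
    have hzero : ∫⁻ u in Set.Ioc (0:ℝ) x, ENNReal.ofReal ((1/u) * max (u - x) 0) = 0 := by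
      have h2 : ∀ u ∈ Set.Ioc (0:ℝ) x, ENNReal.ofReal ((1/u) * max (u - x) 0) = 0 := by
        intro u hu
        rw [max_eq_right (by linarith [hu.2] : u - x ≤ 0)]
        simp
      rw [setLIntegral_congr_fun measurableSet_Ioc h2]
      simp
    rw [hzero, zero_add]
    have hcong : ∫⁻ u in Set.Ioc x 1, ENNReal.ofReal ((1/u) * max (u - x) 0)
        = ∫⁻ u in Set.Ioc x 1, ENNReal.ofReal ((1/u) * (u - x)) := by
      refine setLIntegral_congr_fun measurableSet_Ioc
        (fun u hu => ?_)
      rw [max_eq_left (by linarith [hu.1] : 0 ≤ u - x)]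
    rw [hcong]
    have hconts : ContinuousOn (fun u : ℝ => (1/u) * (u - x)) (Set.Icc x 1) := by
      apply ContinuousOn.mul
      · exact ContinuousOn.div continuousOn_const continuousOn_id
          (fun u hu => ne_of_gt (lt_of_lt_of_le hxpos hu.1))
      · exact (continuousOn_id.sub continuousOn_const)
    have hint : IntegrableOn (fun u : ℝ => (1/u) * (u - x)) (Set.Ioc x 1) := by
      exact (hconts.integrableOn_compact isCompact_Icc).mono_set Set.Ioc_subset_Icc_self
    have hnonneg : 0 ≤ᶠ[ae (volume.restrict (Set.Ioc x 1))] fun u : ℝ => (1/u) * (u - x) := by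
      refine ae_restrict_of_forall_mem measurableSet_Ioc (fun u hu => ?_)
      simp only [Pi.zero_apply]
      have h3 : 0 < u := lt_of_lt_of_le hxpos hu.1.le
      have h4 : x ≤ u := hu.1.le
      exact mul_nonneg (by positivity) (by linarith)
    rw [← ofReal_integral_eq_lintegral_ofReal hint hnonneg]
    congr 1
    rw [← intervalIntegral.integral_of_le hx1]
    have heq : Set.EqOn (fun u : ℝ => (1/u) * (u - x)) (fun u : ℝ => 1 - x * (1/u))
        (Set.uIcc x 1) := by
      intro u hu
      rw [Set.uIcc_of_le hx1] at hu
      have hu0 : u ≠ 0 := ne_of_gt (lt_of_lt_of_le hxpos hu.1)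
      field_simp
    rw [intervalIntegral.integral_congr heq]
    have h0notin : (0:ℝ) ∉ Set.uIcc x 1 := by
      rw [Set.uIcc_of_le hx1]
      intro h; exact absurd h.1 (not_le.mpr hxpos)
    have hi1 : IntervalIntegrable (fun u : ℝ => 1/u) volume x 1 := by
      refine intervalIntegral.intervalIntegrable_one_div (fun u hu => ?_) (by fun_prop)
      rintro rfl; exact h0notin hu
    rw [intervalIntegral.integral_sub intervalIntegrable_const (hi1.const_mul x)]
    rw [intervalIntegral.integral_const, intervalIntegral.integral_const_mul,
      integral_one_div h0notin]
    simp only [smul_eq_mul, mul_one, one_div, Real.log_inv]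
    ring

lemma aux_vol_eq {x u : ℝ} (hx : x ∈ Set.Icc (0:ℝ) 1) (hu : 0 < u) :
    (volume.restrict (Set.Ioc (0:ℝ) u)) (Set.Ici x) = ENNReal.ofReal (max (u - x) 0) := by
  rw [Measure.restrict_apply measurableSet_Ici]
  rcases eq_or_lt_of_le hx.1 with h0 | hxpos
  · have : Set.Ici x ∩ Set.Ioc 0 u = Set.Ioc 0 u := by
      rw [Set.inter_eq_right]
      intro v hv; rw [← h0]; exact hv.1.le
    rw [this, Real.volume_Ioc, ← h0, sub_zero, max_eq_left hu.le]
  · have hset : Set.Ici x ∩ Set.Ioc 0 u = Set.Icc x u := by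
      ext v
      simp only [Set.mem_inter_iff, Set.mem_Ici, Set.mem_Ioc, Set.mem_Icc]
      constructor
      · rintro ⟨h1, _, h3⟩; exact ⟨h1, h3⟩
      · rintro ⟨h1, h2⟩; exact ⟨h1, lt_of_lt_of_le hxpos h1, h2⟩
    rw [hset, Real.volume_Icc]
    rcases le_total x u with h | h
    · rw [max_eq_left (by linarith)]
    · rw [max_eq_right (by linarith), ENNReal.ofReal_eq_zero.mpr (by linarith), ENNReal.ofReal_zero]

lemma aux_inner_v {Ω : Type*} [MeasurableSpace Ω] (P : Measure Ω) [IsProbabilityMeasure P]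
    (V : Ω → ℝ) (hV : Measurable V) (hsupp : ∀ᵐ ω ∂P, V ω ∈ Set.Icc (0:ℝ) 1)
    {u : ℝ} (hu : 0 < u) :
    ∫⁻ v in Set.Ioc (0:ℝ) u, P {ω | V ω ≤ v}
      = ∫⁻ ω, ENNReal.ofReal (max (u - V ω) 0) ∂P := by
  have hS : MeasurableSet {p : ℝ × Ω | V p.2 ≤ p.1} :=
    measurableSet_le (hV.comp measurable_snd) measurable_fst
  have hswap := lintegral_lintegral_swap (μ := volume.restrict (Set.Ioc (0:ℝ) u)) (ν := P)
    (f := fun v ω => Set.indicator {p : ℝ × Ω | V p.2 ≤ p.1} 1 (v, ω))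
    ((measurable_one.indicator hS).aemeasurable)
  have hL : ∀ v : ℝ, ∫⁻ ω, Set.indicator {p : ℝ × Ω | V p.2 ≤ p.1} 1 (v, ω) ∂P
      = P {ω | V ω ≤ v} := by
    intro v
    have h1 : (fun ω => Set.indicator {p : ℝ × Ω | V p.2 ≤ p.1} (1 : ℝ × Ω → ENNReal) (v, ω))
        = Set.indicator {ω | V ω ≤ v} 1 := by
      ext ω
      by_cases h : V ω ≤ v <;> simp [Set.indicator, h]
    rw [h1]
    exact lintegral_indicator_one (hV measurableSet_Iic)
  have hR : ∀ᵐ ω ∂P, (∫⁻ v in Set.Ioc (0:ℝ) u,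
      Set.indicator {p : ℝ × Ω | V p.2 ≤ p.1} 1 (v, ω))
      = ENNReal.ofReal (max (u - V ω) 0) := by
    filter_upwards [hsupp] with ω hω
    have h1 : (fun v => Set.indicator {p : ℝ × Ω | V p.2 ≤ p.1} (1 : ℝ × Ω → ENNReal) (v, ω))
        = Set.indicator (Set.Ici (V ω)) 1 := by
      ext v
      by_cases h : V ω ≤ v <;> simp [Set.indicator, h]
    rw [h1, lintegral_indicator_one measurableSet_Ici]
    exact aux_vol_eq hω hu
  calc ∫⁻ v in Set.Ioc (0:ℝ) u, P {ω | V ω ≤ v}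
      = ∫⁻ v in Set.Ioc (0:ℝ) u, ∫⁻ ω, Set.indicator {p : ℝ × Ω | V p.2 ≤ p.1} 1 (v, ω) ∂P := by
        exact (setLIntegral_congr_fun measurableSet_Ioc
          (fun v _ => (hL v).symm))
    _ = ∫⁻ ω, (∫⁻ v in Set.Ioc (0:ℝ) u,
          Set.indicator {p : ℝ × Ω | V p.2 ≤ p.1} 1 (v, ω)) ∂P := hswap
    _ = ∫⁻ ω, ENNReal.ofReal (max (u - V ω) 0) ∂P := lintegral_congr_ae hR

/-- For `φ(x) = -x log₂ x` and a `[0,1]`-valued random variable `V` with mean `μ`,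
`E[φ(V)] = log₂(e) · (1 - μ - ∫₀¹ ∫₀^u (1/u) P[V ≤ v] dv du)`. -/
theorem expectation_phi_integral_representation {Ω : Type*} [MeasurableSpace Ω]
    (P : Measure Ω) [IsProbabilityMeasure P]
    (V : Ω → ℝ) (hV : Measurable V)
    (hsupp : ∀ᵐ ω ∂P, V ω ∈ Set.Icc (0 : ℝ) 1)
    (μ : ℝ) (hμ : μ = ∫ ω, V ω ∂P)
    -- the double integral is assumed finite
    (hint : IntegrableOn
      (fun u => (1 / u) * ∫ v in Set.Ioc (0 : ℝ) u, (P {ω | V ω ≤ v}).toReal)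
      (Set.Ioc (0 : ℝ) 1)) :
    ∫ ω, -(V ω) * logb 2 (V ω) ∂P
      = logb 2 (Real.exp 1) *
        (1 - μ - ∫ u in Set.Ioc (0 : ℝ) 1,
          (1 / u) * ∫ v in Set.Ioc (0 : ℝ) u, (P {ω | V ω ≤ v}).toReal) := by
  have hVint : Integrable V P := by
    refine Integrable.mono' (integrable_const 1) hV.aestronglyMeasurable ?_
    filter_upwards [hsupp] with ω hω
    rw [Real.norm_eq_abs, abs_le]; exact ⟨by linarith [hω.1], hω.2⟩
  have hVlogint : Integrable (fun ω => V ω * Real.log (V ω)) P := by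
    refine Integrable.mono' (integrable_const 1)
      (hV.mul (Real.measurable_log.comp hV)).aestronglyMeasurable ?_
    filter_upwards [hsupp] with ω hω
    exact aux_xlogx_bounds hω
  -- pointwise step for each u
  have hstep : ∀ u ∈ Set.Ioc (0:ℝ) 1,
      (1 / u) * ∫ v in Set.Ioc (0:ℝ) u, (P {ω | V ω ≤ v}).toReal
        = (∫⁻ ω, ENNReal.ofReal ((1/u) * max (u - V ω) 0) ∂P).toReal := by
    intro u hu
    have hmonoP : Monotone (fun v : ℝ => P {ω | V ω ≤ v}) :=
      fun a b hab => measure_mono (fun ω h => le_trans h hab)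
    have h1 : ∫ v in Set.Ioc (0:ℝ) u, (P {ω | V ω ≤ v}).toReal
        = (∫⁻ v in Set.Ioc (0:ℝ) u, P {ω | V ω ≤ v}).toReal :=
      integral_toReal (hmonoP.measurable.aemeasurable)
        (Filter.Eventually.of_forall fun v => measure_lt_top P _)
    rw [h1, aux_inner_v P V hV hsupp hu.1]
    have h2 : ∀ ω : Ω, ENNReal.ofReal ((1/u) * max (u - V ω) 0)
        = ENNReal.ofReal (1/u) * ENNReal.ofReal (max (u - V ω) 0) := fun ω =>
      ENNReal.ofReal_mul (by have := hu.1; positivity)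
    simp only [h2]
    rw [lintegral_const_mul' _ _ ENNReal.ofReal_ne_top, ENNReal.toReal_mul,
      ENNReal.toReal_ofReal (by have := hu.1; positivity)]
  have hfm : Measurable (Function.uncurry fun (u : ℝ) (ω : Ω) =>
      ENNReal.ofReal ((1/u) * max (u - V ω) 0)) := by
    apply ENNReal.measurable_ofReal.comp
    apply Measurable.mul
    · exact measurable_const.div measurable_fst
    · exact (measurable_fst.sub (hV.comp measurable_snd)).max measurable_const
  have hinnerLm : Measurable (fun u : ℝ => ∫⁻ ω, ENNReal.ofReal ((1/u) * max (u - V ω) 0) ∂P) :=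
    Measurable.lintegral_prod_right hfm
  have hinnerfin : ∀ u ∈ Set.Ioc (0:ℝ) 1,
      (∫⁻ ω, ENNReal.ofReal ((1/u) * max (u - V ω) 0) ∂P) < ⊤ := by
    intro u hu
    have hb : (∫⁻ ω, ENNReal.ofReal ((1/u) * max (u - V ω) 0) ∂P)
        ≤ ∫⁻ _ω, ENNReal.ofReal 1 ∂P := by
      refine lintegral_mono_ae ?_
      filter_upwards [hsupp] with ω hω
      apply ENNReal.ofReal_le_ofReal
      have hmax : max (u - V ω) 0 ≤ u := max_le (by linarith [hω.1]) hu.1.le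
      calc (1/u) * max (u - V ω) 0 ≤ (1/u) * u :=
            mul_le_mul_of_nonneg_left hmax (by have := hu.1; positivity)
        _ = 1 := by rw [one_div, inv_mul_cancel₀ (ne_of_gt hu.1)]
    refine lt_of_le_of_lt hb ?_
    simp
  have hD : (∫ u in Set.Ioc (0:ℝ) 1,
      (1 / u) * ∫ v in Set.Ioc (0:ℝ) u, (P {ω | V ω ≤ v}).toReal)
      = (∫⁻ u in Set.Ioc (0:ℝ) 1,
          ∫⁻ ω, ENNReal.ofReal ((1/u) * max (u - V ω) 0) ∂P).toReal := by
    rw [setIntegral_congr_fun measurableSet_Ioc (fun u hu => hstep u hu)]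
    exact integral_toReal (hinnerLm.aemeasurable)
      (ae_restrict_of_forall_mem measurableSet_Ioc hinnerfin)
  have hswap : (∫⁻ u in Set.Ioc (0:ℝ) 1,
        ∫⁻ ω, ENNReal.ofReal ((1/u) * max (u - V ω) 0) ∂P)
      = ∫⁻ ω, (∫⁻ u in Set.Ioc (0:ℝ) 1, ENNReal.ofReal ((1/u) * max (u - V ω) 0)) ∂P :=
    lintegral_lintegral_swap hfm.aemeasurable
  have hcomp : (∫⁻ ω, (∫⁻ u in Set.Ioc (0:ℝ) 1,
        ENNReal.ofReal ((1/u) * max (u - V ω) 0)) ∂P)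
      = ∫⁻ ω, ENNReal.ofReal (1 - V ω + V ω * Real.log (V ω)) ∂P := by
    refine lintegral_congr_ae ?_
    filter_upwards [hsupp] with ω hω
    exact aux_inner_u hω
  have hpsi_int : Integrable (fun ω => 1 - V ω + V ω * Real.log (V ω)) P :=
    ((integrable_const 1).sub hVint).add hVlogint
  have hpsi : ∫ ω, (1 - V ω + V ω * Real.log (V ω)) ∂P
      = (∫⁻ ω, ENNReal.ofReal (1 - V ω + V ω * Real.log (V ω)) ∂P).toReal := by
    rw [integral_eq_lintegral_of_nonneg_ae ?_ hpsi_int.aestronglyMeasurable]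
    filter_upwards [hsupp] with ω hω
    exact aux_psi_nonneg hω
  have hDval : (∫ u in Set.Ioc (0:ℝ) 1,
      (1 / u) * ∫ v in Set.Ioc (0:ℝ) u, (P {ω | V ω ≤ v}).toReal)
      = 1 - μ + ∫ ω, V ω * Real.log (V ω) ∂P := by
    rw [hD, hswap, hcomp, ← hpsi]
    have hsub : Integrable (fun ω => 1 - V ω) P := (integrable_const 1).sub hVint
    rw [integral_add hsub hVlogint, integral_sub (integrable_const 1) hVint]
    simp [hμ]
  rw [hDval]
  have hLHS : ∫ ω, -(V ω) * Real.logb 2 (V ω) ∂P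
      = -(Real.log 2)⁻¹ * ∫ ω, V ω * Real.log (V ω) ∂P := by
    have h1 : (fun ω => -(V ω) * Real.logb 2 (V ω))
        = fun ω => (-(Real.log 2)⁻¹) * (V ω * Real.log (V ω)) := by
      ext ω; simp only [Real.logb, div_eq_mul_inv]; ring
    rw [h1, integral_const_mul]
  rw [hLHS, Real.logb, Real.log_exp]
  ring
end

section
/- Let φ(x) = -x·log₂ x, let V be a [0,1]-valued random variable with mean μ > 0, and let G : [0,1] → [0,∞) be a nonincreasing function with ∫₀^1 G(p) dp = 1/μ. Suppose that for all u ∈ [0,1], ∫₀^u P[V ≤ v] dv ≤ u - μ · ∫₀^u G(p) dp. Then E[φ(V)] ≥ μ · log₂(e) · ( -1 + ∫₀^1 (1/u) ∫₀^u G(p) dp du ). -/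
open MeasureTheory Real Set
open scoped Interval ENNReal

private lemma integral_indicator_Ici (x u : ℝ) (hx : 0 ≤ x) (hu : 0 ≤ u) :
    ∫ v in Ioc (0:ℝ) u, (if x ≤ v then (1:ℝ) else 0) = u - min x u := by
  have hmeas : MeasurableSet (Ici x) := measurableSet_Ici
  have heq : (fun v => (if x ≤ v then (1:ℝ) else 0)) = (Ici x).indicator (fun _ => (1:ℝ)) := by
    funext v; simp [Set.indicator_apply, Set.mem_Ici]
  rw [heq, MeasureTheory.integral_indicator_const _ hmeas, measureReal_def, Measure.restrict_apply hmeas]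
  rcases eq_or_lt_of_le hx with h0 | h0
  · subst h0
    have hset : Ici (0:ℝ) ∩ Ioc 0 u = Ioc 0 u := by
      apply inter_eq_self_of_subset_right
      intro v hv; exact le_of_lt hv.1
    simp [hset, Real.volume_Ioc, ENNReal.toReal_ofReal hu, min_eq_left hu]
  · have hset : Ici x ∩ Ioc 0 u = Icc x u := by
      ext v
      constructor
      · rintro ⟨h1, _, h3⟩; exact ⟨h1, h3⟩
      · rintro ⟨h1, h2⟩; exact ⟨h1, lt_of_lt_of_le h0 h1, h2⟩
    rw [hset, Real.volume_Icc]
    rcases le_total x u with h | h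
    · rw [ENNReal.toReal_ofReal (by linarith), min_eq_left h]; simp
    · rw [min_eq_right h]
      have : ENNReal.ofReal (u - x) = 0 := ENNReal.ofReal_eq_zero.2 (by linarith)
      simp [this]

private lemma min_div_bound (x u : ℝ) (hx0 : 0 ≤ x) : |min x u / u| ≤ 1 := by
  rcases lt_trichotomy u 0 with hu | hu | hu
  · rw [min_eq_right (le_of_lt (lt_of_lt_of_le hu hx0)), div_self (ne_of_lt hu)]
    simp
  · simp [hu]
  · rw [abs_of_nonneg (div_nonneg (le_min hx0 (le_of_lt hu)) (le_of_lt hu))]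
    rw [div_le_one hu]
    exact min_le_right _ _

private lemma integrableOn_min_div (x : ℝ) (hx0 : 0 ≤ x) (s : Set ℝ) (hs : MeasurableSet s)
    (hfin : volume s < ∞) : IntegrableOn (fun u => min x u / u) s := by
  haveI : Fact (volume s < ∞) := ⟨hfin⟩
  refine ⟨(((measurable_const.min measurable_id).div measurable_id).aestronglyMeasurable), ?_⟩
  exact HasFiniteIntegral.of_bounded (C := 1)
    (Filter.Eventually.of_forall fun u => min_div_bound x u hx0)

private lemma integral_min_div (x : ℝ) (hx0 : 0 ≤ x) (hx1 : x ≤ 1) :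
    ∫ u in Ioc (0:ℝ) 1, min x u / u = x - x * Real.log x := by
  rcases eq_or_lt_of_le hx0 with h0 | h0
  · subst h0
    rw [setIntegral_congr_fun measurableSet_Ioc
      (fun u hu => by simp [min_eq_left (le_of_lt hu.1)] :
        EqOn (fun u => min (0:ℝ) u / u) 0 (Ioc 0 1))]
    simp
  · have hsplit : Ioc (0:ℝ) 1 = Ioc 0 x ∪ Ioc x 1 := (Set.Ioc_union_Ioc_eq_Ioc hx0 hx1).symm
    have hdisj : Disjoint (Ioc (0:ℝ) x) (Ioc x 1) := Set.Ioc_disjoint_Ioc_of_le le_rfl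
    have hnz : (0:ℝ) ∉ [[x, (1:ℝ)]] := Set.notMem_uIcc_of_lt h0 one_pos
    have e1 : ∫ u in Ioc (0:ℝ) x, min x u / u = x := by
      rw [setIntegral_congr_fun measurableSet_Ioc
        (fun u hu => by dsimp only; rw [min_eq_right hu.2, div_self (ne_of_gt hu.1)] :
          EqOn (fun u => min x u / u) (fun _ => (1:ℝ)) (Ioc 0 x))]
      simp [Real.volume_Ioc, ENNReal.toReal_ofReal hx0, hx0]
    have e2 : ∫ u in Ioc x 1, min x u / u = -(x * Real.log x) := by
      rw [setIntegral_congr_fun measurableSet_Ioc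
        (fun u hu => by dsimp only; rw [min_eq_left (le_of_lt hu.1)]; ring :
          EqOn (fun u => min x u / u) (fun u => x * u⁻¹) (Ioc x 1))]
      rw [integral_const_mul, ← intervalIntegral.integral_of_le hx1, integral_inv hnz]
      rw [one_div, Real.log_inv]
      ring
    rw [hsplit, setIntegral_union hdisj measurableSet_Ioc
      (integrableOn_min_div x hx0 _ measurableSet_Ioc measure_Ioc_lt_top)
      (integrableOn_min_div x hx0 _ measurableSet_Ioc measure_Ioc_lt_top), e1, e2]
    ring

/-- If `V` is `[0,1]`-valued with mean `μ > 0`, `G : [0,1] → [0,∞)` is nonincreasing with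
`∫₀¹ G = 1/μ`, and `∫₀^u P[V ≤ v] dv ≤ u - μ ∫₀^u G(p) dp` for all `u ∈ [0,1]`, then
`E[φ(V)] ≥ μ log₂(e) (-1 + ∫₀¹ (1/u) ∫₀^u G(p) dp du)`, where `φ(x) = -x log₂ x`. -/
theorem expectation_phi_lower_bound {Ω : Type*} [MeasurableSpace Ω]
    (P : Measure Ω) [IsProbabilityMeasure P]
    (V : Ω → ℝ) (hV : Measurable V)
    (hsupp : ∀ᵐ ω ∂P, V ω ∈ Set.Icc (0 : ℝ) 1)
    (μ : ℝ) (hμ : μ = ∫ ω, V ω ∂P) (hμpos : 0 < μ)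
    (G : ℝ → ℝ) (hGnonneg : ∀ p ∈ Set.Icc (0 : ℝ) 1, 0 ≤ G p)
    (hGanti : AntitoneOn G (Set.Icc (0 : ℝ) 1))
    (hGint : IntegrableOn G (Set.Ioc (0 : ℝ) 1))
    (hGtotal : ∫ p in Set.Ioc (0 : ℝ) 1, G p = 1 / μ)
    (hdom : ∀ u ∈ Set.Icc (0 : ℝ) 1,
      ∫ v in Set.Ioc (0 : ℝ) u, (P {ω | V ω ≤ v}).toReal
        ≤ u - μ * ∫ p in Set.Ioc (0 : ℝ) u, G p)
    -- all iterated integrals are assumed finite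
    (houter : IntegrableOn (fun u => (1 / u) * ∫ p in Set.Ioc (0 : ℝ) u, G p)
      (Set.Ioc (0 : ℝ) 1))
    (houter' : IntegrableOn
      (fun u => (1 / u) * ∫ v in Set.Ioc (0 : ℝ) u, (P {ω | V ω ≤ v}).toReal)
      (Set.Ioc (0 : ℝ) 1)) :
    ∫ ω, -(V ω) * logb 2 (V ω) ∂P
      ≥ μ * logb 2 (Real.exp 1) *
        (-1 + ∫ u in Set.Ioc (0 : ℝ) 1, (1 / u) * ∫ p in Set.Ioc (0 : ℝ) u, G p) := by
  classical
  set W : Ω → ℝ := fun ω => max 0 (min 1 (V ω)) with hWdef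
  have hWmeas : Measurable W := measurable_const.max (measurable_const.min hV)
  have hW0 : ∀ ω, 0 ≤ W ω := fun ω => le_max_left _ _
  have hW1 : ∀ ω, W ω ≤ 1 := fun ω => max_le zero_le_one (min_le_left _ _)
  have hWV : ∀ᵐ ω ∂P, W ω = V ω := by
    filter_upwards [hsupp] with ω h
    simp [hWdef, min_eq_right h.2, max_eq_right h.1]
  have hPeq : ∀ v : ℝ, P {ω | W ω ≤ v} = P {ω | V ω ≤ v} := by
    intro v
    apply measure_congr
    filter_upwards [hWV] with ω h
    show (W ω ≤ v) = (V ω ≤ v)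
    rw [h]
  -- Fubini for each fixed u : E[min(W,u)] = u - ∫₀^u P(V ≤ v) dv
  have key_u : ∀ u : ℝ, 0 ≤ u → ∫ ω, min (W ω) u ∂P
      = u - ∫ v in Set.Ioc (0:ℝ) u, (P {ω | V ω ≤ v}).toReal := by
    intro u hu
    haveI : Fact (volume (Set.Ioc (0:ℝ) u) < ∞) := ⟨measure_Ioc_lt_top⟩
    set ν := volume.restrict (Set.Ioc (0:ℝ) u) with hν
    set f2 : Ω × ℝ → ℝ := fun p => if W p.1 ≤ p.2 then 1 else 0 with hf2
    have hmeasf2 : Measurable f2 := Measurable.ite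
      (measurableSet_le (hWmeas.comp measurable_fst) measurable_snd)
      measurable_const measurable_const
    have hint2 : Integrable f2 (P.prod ν) :=
      ⟨hmeasf2.aestronglyMeasurable, HasFiniteIntegral.of_bounded (C := 1)
        (Filter.Eventually.of_forall fun p => by
          by_cases h : W p.1 ≤ p.2 <;> simp [hf2, h])⟩
    have swap : ∫ ω, (∫ v, f2 (ω, v) ∂ν) ∂P = ∫ v, (∫ ω, f2 (ω, v) ∂P) ∂ν :=
      integral_integral_swap hint2
    have inner_ω : ∀ ω, ∫ v, f2 (ω, v) ∂ν = u - min (W ω) u := fun ω =>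
      integral_indicator_Ici (W ω) u (hW0 ω) hu
    have inner_v : ∀ v : ℝ, ∫ ω, f2 (ω, v) ∂P = (P {ω | V ω ≤ v}).toReal := by
      intro v
      have heq : (fun ω => f2 (ω, v)) = ({ω | W ω ≤ v}).indicator (fun _ => (1:ℝ)) := by
        funext ω; simp [hf2, Set.indicator_apply, Set.mem_setOf_eq]
      rw [heq, integral_indicator_const _ (measurableSet_le hWmeas measurable_const)]
      simp [hPeq v, measureReal_def]
    have hii : Integrable (fun ω => ∫ v, f2 (ω, v) ∂ν) P := hint2.integral_prod_left
    calc ∫ ω, min (W ω) u ∂P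
        = ∫ ω, (u - ∫ v, f2 (ω, v) ∂ν) ∂P := by
          apply integral_congr_ae
          filter_upwards with ω
          rw [inner_ω ω]; ring
      _ = u - ∫ ω, (∫ v, f2 (ω, v) ∂ν) ∂P := by
          rw [integral_sub (integrable_const u) hii, integral_const]; simp
      _ = u - ∫ v, (∫ ω, f2 (ω, v) ∂P) ∂ν := by rw [swap]
      _ = u - ∫ v in Set.Ioc (0:ℝ) u, (P {ω | V ω ≤ v}).toReal := by
          congr 1
          exact integral_congr_ae (Filter.Eventually.of_forall inner_v)
  -- main Fubini
  haveI : Fact (volume (Set.Ioc (0:ℝ) 1) < ∞) := ⟨measure_Ioc_lt_top⟩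
  set ν1 := volume.restrict (Set.Ioc (0:ℝ) 1) with hν1
  set f1 : Ω × ℝ → ℝ := fun p => min (W p.1) p.2 / p.2 with hf1
  have hmeasf1 : Measurable f1 :=
    ((hWmeas.comp measurable_fst).min measurable_snd).div measurable_snd
  have hint1 : Integrable f1 (P.prod ν1) := ⟨hmeasf1.aestronglyMeasurable,
    HasFiniteIntegral.of_bounded (C := 1)
      (Filter.Eventually.of_forall fun p => min_div_bound _ _ (hW0 _))⟩
  have swap1 : ∫ ω, (∫ u', f1 (ω, u') ∂ν1) ∂P = ∫ u', (∫ ω, f1 (ω, u') ∂P) ∂ν1 :=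
    integral_integral_swap hint1
  have inner1 : ∀ ω, ∫ u', f1 (ω, u') ∂ν1 = W ω - W ω * Real.log (W ω) := fun ω =>
    integral_min_div (W ω) (hW0 ω) (hW1 ω)
  have E1 : ∫ u', (∫ ω, f1 (ω, u') ∂P) ∂ν1
      = ∫ u in Set.Ioc (0:ℝ) 1,
          (1/u) * (u - ∫ v in Set.Ioc (0:ℝ) u, (P {ω | V ω ≤ v}).toReal) := by
    refine setIntegral_congr_fun measurableSet_Ioc fun u hu => ?_
    have : ∫ ω, f1 (ω, u) ∂P = (∫ ω, min (W ω) u ∂P) / u := integral_div u _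
    rw [this, key_u u (le_of_lt hu.1)]
    ring
  have hφint : Integrable (fun ω => W ω - W ω * Real.log (W ω)) P :=
    hint1.integral_prod_left.congr (Filter.Eventually.of_forall inner1)
  have hWint : Integrable W P := ⟨hWmeas.aestronglyMeasurable,
    HasFiniteIntegral.of_bounded (C := 1) (Filter.Eventually.of_forall fun ω => by
      rw [Real.norm_eq_abs, abs_of_nonneg (hW0 ω)]; exact hW1 ω)⟩
  have hμW : ∫ ω, W ω ∂P = μ := by
    rw [hμ]; exact integral_congr_ae hWV
  have hmain : ∫ ω, -(W ω) * Real.log (W ω) ∂P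
      = (∫ u in Set.Ioc (0:ℝ) 1,
          (1/u) * (u - ∫ v in Set.Ioc (0:ℝ) u, (P {ω | V ω ≤ v}).toReal)) - μ := by
    have h1 : ∫ ω, -(W ω) * Real.log (W ω) ∂P
        = ∫ ω, ((W ω - W ω * Real.log (W ω)) - W ω) ∂P := by
      apply integral_congr_ae
      filter_upwards with ω
      ring
    rw [h1, integral_sub hφint hWint, hμW]
    congr 1
    rw [← E1, ← swap1]
    exact integral_congr_ae (Filter.Eventually.of_forall fun ω => (inner1 ω).symm)
  -- integrability of the lower-bounding integrand
  have hFint : IntegrableOn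
      (fun u => (1/u) * (u - ∫ v in Set.Ioc (0:ℝ) u, (P {ω | V ω ≤ v}).toReal))
      (Set.Ioc (0:ℝ) 1) := by
    have hg : Integrable
        (fun u => 1 - (1/u) * ∫ v in Set.Ioc (0:ℝ) u, (P {ω | V ω ≤ v}).toReal)
        (volume.restrict (Set.Ioc (0:ℝ) 1)) :=
      (integrable_const 1).sub houter'
    apply hg.congr
    filter_upwards [ae_restrict_mem measurableSet_Ioc] with u hu
    have hu0 : u ≠ 0 := ne_of_gt hu.1
    field_simp
  -- comparison
  have hineq : ∫ u in Set.Ioc (0:ℝ) 1, μ * ((1/u) * ∫ p in Set.Ioc (0:ℝ) u, G p)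
      ≤ ∫ u in Set.Ioc (0:ℝ) 1,
          (1/u) * (u - ∫ v in Set.Ioc (0:ℝ) u, (P {ω | V ω ≤ v}).toReal) := by
    apply setIntegral_mono_on (houter.const_mul μ) hFint measurableSet_Ioc
    intro u hu
    have hu0 : 0 < u := hu.1
    have h := hdom u ⟨le_of_lt hu.1, hu.2⟩
    have h2 : μ * ∫ p in Set.Ioc (0:ℝ) u, G p
        ≤ u - ∫ v in Set.Ioc (0:ℝ) u, (P {ω | V ω ≤ v}).toReal := by linarith
    calc μ * ((1/u) * ∫ p in Set.Ioc (0:ℝ) u, G p)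
        = (1/u) * (μ * ∫ p in Set.Ioc (0:ℝ) u, G p) := by ring
      _ ≤ (1/u) * (u - ∫ v in Set.Ioc (0:ℝ) u, (P {ω | V ω ≤ v}).toReal) :=
          mul_le_mul_of_nonneg_left h2 (by positivity)
  have hlog2 : (0:ℝ) < Real.log 2 := Real.log_pos one_lt_two
  have hgoalW : ∫ ω, -(V ω) * logb 2 (V ω) ∂P
      = (∫ ω, -(W ω) * Real.log (W ω) ∂P) / Real.log 2 := by
    rw [← integral_div]
    apply integral_congr_ae
    filter_upwards [hWV] with ω h
    rw [← h, Real.logb]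
    ring
  have hlb : μ * (-1 + ∫ u in Set.Ioc (0:ℝ) 1, (1/u) * ∫ p in Set.Ioc (0:ℝ) u, G p)
      ≤ ∫ ω, -(W ω) * Real.log (W ω) ∂P := by
    rw [hmain]
    have := hineq
    rw [integral_const_mul] at this
    linarith
  rw [ge_iff_le, hgoalW, Real.logb, Real.log_exp]
  calc μ * (1 / Real.log 2) *
        (-1 + ∫ u in Set.Ioc (0:ℝ) 1, (1/u) * ∫ p in Set.Ioc (0:ℝ) u, G p)
      = (μ * (-1 + ∫ u in Set.Ioc (0:ℝ) 1, (1/u) * ∫ p in Set.Ioc (0:ℝ) u, G p))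
          / Real.log 2 := by ring
    _ ≤ (∫ ω, -(W ω) * Real.log (W ω) ∂P) / Real.log 2 := by gcongr
end

section
/- Let (Y_k)_{k≥1} be i.i.d. random variables and for each y let r_y be a measurable function with conditional mean κ_y = E[ln r_y(X) | Y = y] and conditional variance σ_y² = Var[ln r_y(X) | Y = y], where (X_k, Y_k) are i.i.d. pairs. Assume 0 < σ_Y² almost surely, E[σ_Y²] < ∞, and Var[ln r_Y(X)] < ∞ (unconditionally). Let s_n² = Σ_{k=1}^n σ_{Y_k}². Then almost surely (over (Y_k)), the Lindeberg condition holds: for all ε > 0, lim_{n→∞} (1/s_n²) Σ_{k=1}^n E[ (ln r_{Y_k}(X_k) - κ_{Y_k})² · 1[ |ln r_{Y_k}(X_k) - κ_{Y_k}| ≥ s_n ε ] | Y_k ] = 0. -/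
open MeasureTheory ProbabilityTheory Filter
open scoped Topology

/-- Lindeberg condition for the conditional log-likelihood ratios. Here `Y k` are i.i.d.
with law `ν`, the Markov kernel `κX` gives the conditional law of `ln r_y(X)` given
`Y = y`, with conditional mean `m y` and conditional variance `σ2 y`. Assuming
`σ2 Y > 0` a.s., `E[σ2 Y] < ∞` and a finite unconditional second moment, the Lindeberg
condition holds almost surely over the sequence `(Y_k)`. -/
theorem lindeberg_condition_holds {Ω 𝒴 : Type*} [MeasurableSpace Ω] [MeasurableSpace 𝒴]
    (P : Measure Ω) [IsProbabilityMeasure P]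
    (Y : ℕ → Ω → 𝒴) (hYmeas : ∀ k, Measurable (Y k))
    (hindep : iIndepFun Y P)
    (hident : ∀ k, IdentDistrib (Y k) (Y 0) P P)
    (ν : Measure 𝒴) [IsProbabilityMeasure ν] (hν : P.map (Y 0) = ν)
    -- conditional law of `ln r_Y(X)` given `Y = y`
    (κX : Kernel 𝒴 ℝ) [IsMarkovKernel κX]
    (m σ2 : 𝒴 → ℝ)
    (hm : ∀ y, m y = ∫ t, t ∂(κX y))
    (hσ2 : ∀ y, σ2 y = ∫ t, (t - m y) ^ 2 ∂(κX y))
    (hpos : ∀ᵐ y ∂ν, 0 < σ2 y)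
    (hσint : Integrable σ2 ν)
    (hsecond : Integrable (fun y => ∫ t, t ^ 2 ∂(κX y)) ν) :
    ∀ᵐ ω ∂P, ∀ ε > (0 : ℝ),
      Tendsto (fun n =>
        (∑ k ∈ Finset.range n,
          ∫ t, (t - m (Y k ω)) ^ 2 *
            (if Real.sqrt (∑ j ∈ Finset.range n, σ2 (Y j ω)) * ε ≤ |t - m (Y k ω)|
              then (1 : ℝ) else 0) ∂(κX (Y k ω))) /
        (∑ k ∈ Finset.range n, σ2 (Y k ω)))
        atTop (nhds 0) := by
  classical
  -- measurability of `m`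
  have hm_meas : Measurable m := by
    have h1 : StronglyMeasurable (fun p : 𝒴 × ℝ => p.2) :=
      measurable_snd.stronglyMeasurable
    have h2 : StronglyMeasurable fun y => ∫ t, (fun p : 𝒴 × ℝ => p.2) (y, t) ∂(κX y) :=
      h1.integral_kernel_prod_right'
    have e : m = fun y => ∫ t, t ∂(κX y) := funext hm
    rw [e]; exact h2.measurable
  -- measurability of `σ2`
  have hFm : StronglyMeasurable (fun p : 𝒴 × ℝ => (p.2 - m p.1) ^ 2) :=
    ((measurable_snd.sub (hm_meas.comp measurable_fst)).pow_const 2).stronglyMeasurable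
  have hσ2meas : Measurable σ2 := by
    have h2 : StronglyMeasurable fun y => ∫ t, (fun p : 𝒴 × ℝ => (p.2 - m p.1) ^ 2) (y, t) ∂(κX y) :=
      hFm.integral_kernel_prod_right'
    have e : σ2 = fun y => ∫ t, (t - m y) ^ 2 ∂(κX y) := funext hσ2
    rw [e]; exact h2.measurable
  have hσ2nonneg : ∀ y, 0 ≤ σ2 y := fun y => by
    rw [hσ2 y]; exact integral_nonneg fun t => sq_nonneg _
  -- the good set of `y`'s where the second moment is finite
  have hFm' : StronglyMeasurable (Function.uncurry fun y t => (t - m y) ^ 2) := hFm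
  set G : Set 𝒴 := {y | Integrable (fun t => (t - m y) ^ 2) (κX y)} with hGdef
  have hGmeas : MeasurableSet G := measurableSet_kernel_integrable hFm'
  have hG : ∀ᵐ y ∂ν, y ∈ G := by
    filter_upwards [hpos] with y hy
    by_contra hni
    have h0 : ∫ t, (t - m y) ^ 2 ∂(κX y) = 0 := integral_undef hni
    exact hy.ne' ((hσ2 y).trans h0)
  -- the truncated second moments
  set H : ℕ → 𝒴 → ℝ := fun M y =>
    ∫ t, (t - m y) ^ 2 * (if (M : ℝ) ≤ |t - m y| then (1 : ℝ) else 0) ∂(κX y) with hHdef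
  have hite_nonneg : ∀ (c : Prop) [Decidable c], (0:ℝ) ≤ if c then (1:ℝ) else 0 := by
    intro c _; split_ifs <;> norm_num
  have hite_le_one : ∀ (c : Prop) [Decidable c], (if c then (1:ℝ) else 0) ≤ 1 := by
    intro c _; split_ifs <;> norm_num
  have hHmeas : ∀ M : ℕ, Measurable (H M) := by
    intro M
    have h1 : StronglyMeasurable (fun p : 𝒴 × ℝ =>
        (p.2 - m p.1) ^ 2 * (if (M : ℝ) ≤ |p.2 - m p.1| then (1 : ℝ) else 0)) := by
      apply Measurable.stronglyMeasurable
      exact ((measurable_snd.sub (hm_meas.comp measurable_fst)).pow_const 2).mul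
        (Measurable.ite (measurableSet_le measurable_const
          ((measurable_snd.sub (hm_meas.comp measurable_fst)).abs))
          measurable_const measurable_const)
    exact (h1.integral_kernel_prod_right').measurable
  have hHnonneg : ∀ (M : ℕ) y, 0 ≤ H M y := fun M y =>
    integral_nonneg fun t => mul_nonneg (sq_nonneg _) (hite_nonneg _)
  -- integrability of the truncated integrand for good `y`
  have hHint_t : ∀ (s : ℝ) (y), y ∈ G →
      Integrable (fun t => (t - m y) ^ 2 * (if s ≤ |t - m y| then (1 : ℝ) else 0)) (κX y) := by
    intro s y hy
    refine hy.mono' ?_ ?_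
    · exact (((measurable_id.sub_const (m y)).pow_const 2).mul
        (Measurable.ite (measurableSet_le measurable_const
          ((measurable_id.sub_const (m y)).abs)) measurable_const
          measurable_const)).aestronglyMeasurable
    · refine Filter.Eventually.of_forall fun t => ?_
      rw [Real.norm_eq_abs, abs_mul, abs_of_nonneg (sq_nonneg _),
        abs_of_nonneg (hite_nonneg _)]
      exact mul_le_of_le_one_right (sq_nonneg _) (hite_le_one _)
  have hH_le : ∀ (M : ℕ) (y), y ∈ G → H M y ≤ σ2 y := by
    intro M y hy
    rw [hσ2 y, hHdef]
    refine integral_mono_of_nonneg ?_ hy ?_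
    · exact Filter.Eventually.of_forall fun t =>
        mul_nonneg (sq_nonneg _) (hite_nonneg _)
    · exact Filter.Eventually.of_forall fun t =>
        mul_le_of_le_one_right (sq_nonneg _) (hite_le_one _)
  -- pointwise convergence of `H M y → 0` for good `y`
  have hHpt : ∀ y ∈ G, Tendsto (fun M : ℕ => H M y) atTop (𝓝 0) := by
    intro y hy
    have h0 : (0 : ℝ) = ∫ _t : ℝ, (0 : ℝ) ∂(κX y) := by simp
    rw [h0]
    apply tendsto_integral_of_dominated_convergence (fun t => (t - m y) ^ 2)
    · exact fun M => (hHint_t (M : ℝ) y hy).aestronglyMeasurable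
    · exact hy
    · intro M
      refine Filter.Eventually.of_forall fun t => ?_
      rw [Real.norm_eq_abs, abs_mul, abs_of_nonneg (sq_nonneg _),
        abs_of_nonneg (hite_nonneg _)]
      exact mul_le_of_le_one_right (sq_nonneg _) (hite_le_one _)
    · refine Filter.Eventually.of_forall fun t => ?_
      have hev : ∀ᶠ M : ℕ in atTop,
          (t - m y) ^ 2 * (if (M : ℝ) ≤ |t - m y| then (1 : ℝ) else 0) = 0 := by
        filter_upwards [eventually_gt_atTop ⌈|t - m y|⌉₊] with M hM
        rw [if_neg, mul_zero]
        push_neg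
        calc |t - m y| ≤ (⌈|t - m y|⌉₊ : ℝ) := Nat.le_ceil _
          _ < M := by exact_mod_cast hM
      have hev' : (fun M : ℕ => (t - m y) ^ 2 *
          (if (M : ℝ) ≤ |t - m y| then (1 : ℝ) else 0)) =ᶠ[atTop] fun _ => (0 : ℝ) := hev
      exact Tendsto.congr' hev'.symm tendsto_const_nhds
  -- `∫ H M dν → 0`
  have hHint : ∀ M : ℕ, Integrable (H M) ν := by
    intro M
    refine hσint.mono' (hHmeas M).aestronglyMeasurable ?_
    filter_upwards [hG] with y hy
    rw [Real.norm_eq_abs, abs_of_nonneg (hHnonneg M y)]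
    exact hH_le M y hy
  have hItend : Tendsto (fun M : ℕ => ∫ y, H M y ∂ν) atTop (𝓝 0) := by
    have h0 : (0 : ℝ) = ∫ _y : 𝒴, (0 : ℝ) ∂ν := by simp
    rw [h0]
    apply tendsto_integral_of_dominated_convergence σ2
    · exact fun M => (hHmeas M).aestronglyMeasurable
    · exact hσint
    · intro M
      filter_upwards [hG] with y hy
      rw [Real.norm_eq_abs, abs_of_nonneg (hHnonneg M y)]
      exact hH_le M y hy
    · filter_upwards [hG] with y hy
      exact hHpt y hy
  -- positivity of the mean variance
  set σbar : ℝ := ∫ y, σ2 y ∂ν with hσbardef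
  have hσbar_nonneg : 0 ≤ σbar := integral_nonneg hσ2nonneg
  have hσbar_pos : 0 < σbar := by
    rcases hσbar_nonneg.lt_or_eq with h | h
    · exact h
    · exfalso
      have hz : σ2 =ᵐ[ν] 0 :=
        (integral_eq_zero_iff_of_nonneg_ae (Filter.Eventually.of_forall hσ2nonneg) hσint).1 h.symm
      have hfalse : ∀ᵐ _y ∂ν, False := by
        filter_upwards [hz, hpos] with y h1 h2
        rw [h1] at h2; exact lt_irrefl 0 h2
      have : (ae ν).NeBot := ae_neBot.2 (IsProbabilityMeasure.ne_zero ν)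
      obtain ⟨_, hc⟩ := hfalse.exists
      exact hc
  -- strong law for `σ2 ∘ Y`
  have hint0 : Integrable (fun ω => σ2 (Y 0 ω)) P := by
    have h1 : Integrable σ2 (P.map (Y 0)) := by rwa [hν]
    exact (integrable_map_measure hσ2meas.aestronglyMeasurable (hYmeas 0).aemeasurable).1 h1
  have hEσ : ∫ ω, σ2 (Y 0 ω) ∂P = σbar := by
    rw [hσbardef, ← hν, integral_map (hYmeas 0).aemeasurable hσ2meas.aestronglyMeasurable]
  have hA : ∀ᵐ ω ∂P, Tendsto (fun n : ℕ =>
      (∑ i ∈ Finset.range n, σ2 (Y i ω)) / n) atTop (𝓝 σbar) := by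
    have := strong_law_ae_real (fun k ω => σ2 (Y k ω)) hint0
      (fun i j hij => (hindep.comp (fun _ => σ2) (fun _ => hσ2meas)).indepFun hij)
      (fun i => (hident i).comp hσ2meas)
    simpa [hEσ] using this
  -- strong law for each `H M ∘ Y`
  have hB : ∀ M : ℕ, ∀ᵐ ω ∂P, Tendsto (fun n : ℕ =>
      (∑ i ∈ Finset.range n, H M (Y i ω)) / n) atTop (𝓝 (∫ y, H M y ∂ν)) := by
    intro M
    have hint0' : Integrable (fun ω => H M (Y 0 ω)) P := by
      have h1 : Integrable (H M) (P.map (Y 0)) := by rw [hν]; exact hHint M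
      exact (integrable_map_measure (hHmeas M).aestronglyMeasurable
        (hYmeas 0).aemeasurable).1 h1
    have hE : ∫ ω, H M (Y 0 ω) ∂P = ∫ y, H M y ∂ν := by
      rw [← hν, integral_map (hYmeas 0).aemeasurable (hHmeas M).aestronglyMeasurable]
    have := strong_law_ae_real (fun k ω => H M (Y k ω)) hint0'
      (fun i j hij => (hindep.comp (fun _ => H M) (fun _ => hHmeas M)).indepFun hij)
      (fun i => (hident i).comp (hHmeas M))
    simpa [hE] using this
  -- almost surely all `Y k ω` are good
  have hC : ∀ᵐ ω ∂P, ∀ k, Y k ω ∈ G := by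
    rw [ae_all_iff]
    intro k
    have hmap : P.map (Y k) = ν := by rw [(hident k).map_eq, hν]
    have h1 : ∀ᵐ y ∂(P.map (Y k)), y ∈ G := by rwa [hmap]
    exact (ae_map_iff (hYmeas k).aemeasurable hGmeas).1 h1
  -- combine
  filter_upwards [hA, ae_all_iff.2 hB, hC] with ω hAω hBω hCω
  intro ε hε
  rw [NormedAddCommGroup.tendsto_nhds_zero]
  intro δ hδ
  obtain ⟨M, hM⟩ : ∃ M : ℕ, ∫ y, H M y ∂ν < δ * σbar :=
    (hItend.eventually_lt_const (by positivity)).exists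
  set D : ℕ → ℝ := fun n => ∑ k ∈ Finset.range n, σ2 (Y k ω) with hDdef
  have hDnonneg : ∀ n, 0 ≤ D n := fun n => Finset.sum_nonneg fun k _ => hσ2nonneg _
  have hDlarge : ∀ᶠ n : ℕ in atTop, σbar / 2 * n < D n := by
    filter_upwards [hAω.eventually_const_lt (half_lt_self hσbar_pos),
      eventually_gt_atTop 0] with n h1 h2
    have hn : (0 : ℝ) < n := Nat.cast_pos.2 h2
    exact (lt_div_iff₀ hn).1 h1
  have hDtop : Tendsto D atTop atTop := by
    refine tendsto_atTop_mono' atTop (hDlarge.mono fun n h => h.le) ?_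
    exact Tendsto.const_mul_atTop (half_pos hσbar_pos) tendsto_natCast_atTop_atTop
  have ev_threshold : ∀ᶠ n : ℕ in atTop, (M : ℝ) ≤ Real.sqrt (D n) * ε := by
    filter_upwards [hDtop.eventually_ge_atTop (((M : ℝ) / ε) ^ 2)] with n hn
    have h1 : (M : ℝ) / ε ≤ Real.sqrt (D n) :=
      (Real.le_sqrt (by positivity) (hDnonneg n)).2 hn
    calc (M : ℝ) = (M : ℝ) / ε * ε := by field_simp
      _ ≤ Real.sqrt (D n) * ε := mul_le_mul_of_nonneg_right h1 hε.le
  have hratio : Tendsto (fun n : ℕ =>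
      (∑ k ∈ Finset.range n, H M (Y k ω)) / D n) atTop (𝓝 ((∫ y, H M y ∂ν) / σbar)) := by
    have h1 := (hBω M).div hAω (ne_of_gt hσbar_pos)
    refine h1.congr' ?_
    filter_upwards [eventually_gt_atTop 0] with n hn
    have hn' : (n : ℝ) ≠ 0 := (Nat.cast_pos.2 hn).ne'
    show (∑ k ∈ Finset.range n, H M (Y k ω)) / n / (D n / n) =
      (∑ k ∈ Finset.range n, H M (Y k ω)) / D n
    rw [div_div_div_comm, div_self hn', div_one]
  have ev_ratio : ∀ᶠ n : ℕ in atTop,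
      (∑ k ∈ Finset.range n, H M (Y k ω)) / D n < δ :=
    hratio.eventually_lt_const ((div_lt_iff₀ hσbar_pos).2 hM)
  have ev_Dpos : ∀ᶠ n : ℕ in atTop, 0 < D n := by
    filter_upwards [hDlarge, eventually_gt_atTop 0] with n h1 h2
    have hn : (0 : ℝ) < n := Nat.cast_pos.2 h2
    nlinarith
  filter_upwards [ev_threshold, ev_ratio, ev_Dpos] with n h1 h2 h3
  have hNum_nonneg : 0 ≤ ∑ k ∈ Finset.range n,
      ∫ t, (t - m (Y k ω)) ^ 2 *
        (if Real.sqrt (D n) * ε ≤ |t - m (Y k ω)| then (1 : ℝ) else 0) ∂(κX (Y k ω)) :=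
    Finset.sum_nonneg fun k _ =>
      integral_nonneg fun t => mul_nonneg (sq_nonneg _) (hite_nonneg _)
  have hNum_le : (∑ k ∈ Finset.range n,
      ∫ t, (t - m (Y k ω)) ^ 2 *
        (if Real.sqrt (D n) * ε ≤ |t - m (Y k ω)| then (1 : ℝ) else 0) ∂(κX (Y k ω))) ≤
      ∑ k ∈ Finset.range n, H M (Y k ω) := by
    refine Finset.sum_le_sum fun k _ => ?_
    refine integral_mono_of_nonneg ?_ (hHint_t (M : ℝ) (Y k ω) (hCω k)) ?_
    · exact Filter.Eventually.of_forall fun t =>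
        mul_nonneg (sq_nonneg _) (hite_nonneg _)
    · refine Filter.Eventually.of_forall fun t => ?_
      refine mul_le_mul_of_nonneg_left ?_ (sq_nonneg _)
      split_ifs with ha hb
      · exact le_refl _
      · exact absurd (le_trans h1 ha) hb
      · norm_num
      · exact le_refl _
  rw [Real.norm_eq_abs, abs_of_nonneg (div_nonneg hNum_nonneg (hDnonneg n))]
  calc (∑ k ∈ Finset.range n,
      ∫ t, (t - m (Y k ω)) ^ 2 *
        (if Real.sqrt (D n) * ε ≤ |t - m (Y k ω)| then (1 : ℝ) else 0) ∂(κX (Y k ω))) / D n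
      ≤ (∑ k ∈ Finset.range n, H M (Y k ω)) / D n := (div_le_div_iff_of_pos_right h3).2 hNum_le
    _ < δ := h2
end

section
/- In the setting of exponential tilting (Q^λ defined via dQ^λ/dP_X = 1[r_y>0] e^{λ ln r_y - Λ(λ)}): for any k > 0 and any λ in an interval [λ̲, λ̄] on which Λ is finite, E_{Q^λ}[ |ln r_y(X)|^k ] ≤ E_{Q^{λ̄}}[ |ln r_y(X)|^k ] + E_{Q^{λ̲}}[ |ln r_y(X)|^k ]. -/
open MeasureTheory
open scoped ENNReal

/-- `a*d + b*c ≤ a*c + b*d` for comonotone pairs in `ℝ≥0∞`. -/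
lemma tilted_aux_comb {a b c d : ℝ≥0∞} (hab : a ≤ b) (hcd : c ≤ d) :
    a * d + b * c ≤ a * c + b * d := by
  obtain ⟨e, rfl⟩ := exists_add_of_le hab
  calc a * d + (a + e) * c = (a * d + a * c) + e * c := by ring
    _ ≤ (a * d + a * c) + e * d := by gcongr
    _ = a * c + (a + e) * d := by ring

/-- Chebyshev correlation inequality for comonotone functions (lintegral form). -/
lemma tilted_aux_cheb {α : Type*} [MeasurableSpace α] (μ : Measure α)
    (f g : α → ℝ≥0∞) (hf : Measurable f) (hg : Measurable g)
    (h : ∀ᵐ x ∂μ, ∀ᵐ z ∂μ, f x * g z + f z * g x ≤ f x * g x + f z * g z) :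
    (∫⁻ x, f x ∂μ) * ∫⁻ x, g x ∂μ ≤ (∫⁻ x, f x * g x ∂μ) * μ Set.univ := by
  have key : ∫⁻ x, ∫⁻ z, (f x * g z + f z * g x) ∂μ ∂μ
      ≤ ∫⁻ x, ∫⁻ z, (f x * g x + f z * g z) ∂μ ∂μ := by
    refine lintegral_mono_ae ?_
    filter_upwards [h] with x hx
    exact lintegral_mono_ae hx
  have L : ∫⁻ x, ∫⁻ z, (f x * g z + f z * g x) ∂μ ∂μ
      = (∫⁻ x, f x ∂μ) * (∫⁻ x, g x ∂μ) + (∫⁻ x, f x ∂μ) * (∫⁻ x, g x ∂μ) := by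
    have h1 : ∀ x, ∫⁻ z, (f x * g z + f z * g x) ∂μ
        = f x * (∫⁻ z, g z ∂μ) + (∫⁻ z, f z ∂μ) * g x := by
      intro x
      rw [lintegral_add_left (hg.const_mul _), lintegral_const_mul _ hg,
        lintegral_mul_const _ hf]
    simp_rw [h1]
    rw [lintegral_add_left (hf.mul_const _), lintegral_mul_const _ hf,
      lintegral_const_mul _ hg]
  have R : ∫⁻ x, ∫⁻ z, (f x * g x + f z * g z) ∂μ ∂μ
      = (∫⁻ x, f x * g x ∂μ) * μ Set.univ + (∫⁻ x, f x * g x ∂μ) * μ Set.univ := by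
    have h1 : ∀ x, ∫⁻ z, (f x * g x + f z * g z) ∂μ
        = f x * g x * μ Set.univ + ∫⁻ z, f z * g z ∂μ := by
      intro x
      rw [lintegral_add_left measurable_const, lintegral_const]
    simp_rw [h1]
    rw [lintegral_add_right _ measurable_const, lintegral_mul_const _ (f := fun a => f a * g a) (hf.mul hg),
      lintegral_const]
  rw [L, R] at key
  by_contra hcon
  push_neg at hcon
  exact absurd key (not_le.mpr (ENNReal.add_lt_add hcon hcon))

/-- Reverse Chebyshev inequality for antitone pairs (lintegral form). -/
lemma tilted_aux_cheb' {α : Type*} [MeasurableSpace α] (μ : Measure α)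
    (f g : α → ℝ≥0∞) (hf : Measurable f) (hg : Measurable g)
    (h : ∀ᵐ x ∂μ, ∀ᵐ z ∂μ, f x * g x + f z * g z ≤ f x * g z + f z * g x) :
    (∫⁻ x, f x * g x ∂μ) * μ Set.univ ≤ (∫⁻ x, f x ∂μ) * ∫⁻ x, g x ∂μ := by
  have key : ∫⁻ x, ∫⁻ z, (f x * g x + f z * g z) ∂μ ∂μ
      ≤ ∫⁻ x, ∫⁻ z, (f x * g z + f z * g x) ∂μ ∂μ := by
    refine lintegral_mono_ae ?_
    filter_upwards [h] with x hx
    exact lintegral_mono_ae hx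
  have L : ∫⁻ x, ∫⁻ z, (f x * g z + f z * g x) ∂μ ∂μ
      = (∫⁻ x, f x ∂μ) * (∫⁻ x, g x ∂μ) + (∫⁻ x, f x ∂μ) * (∫⁻ x, g x ∂μ) := by
    have h1 : ∀ x, ∫⁻ z, (f x * g z + f z * g x) ∂μ
        = f x * (∫⁻ z, g z ∂μ) + (∫⁻ z, f z ∂μ) * g x := by
      intro x
      rw [lintegral_add_left (hg.const_mul _), lintegral_const_mul _ hg,
        lintegral_mul_const _ hf]
    simp_rw [h1]
    rw [lintegral_add_left (hf.mul_const _), lintegral_mul_const _ hf,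
      lintegral_const_mul _ hg]
  have R : ∫⁻ x, ∫⁻ z, (f x * g x + f z * g z) ∂μ ∂μ
      = (∫⁻ x, f x * g x ∂μ) * μ Set.univ + (∫⁻ x, f x * g x ∂μ) * μ Set.univ := by
    have h1 : ∀ x, ∫⁻ z, (f x * g x + f z * g z) ∂μ
        = f x * g x * μ Set.univ + ∫⁻ z, f z * g z ∂μ := by
      intro x
      rw [lintegral_add_left measurable_const, lintegral_const]
    simp_rw [h1]
    rw [lintegral_add_right _ measurable_const, lintegral_mul_const _ (f := fun a => f a * g a) (hf.mul hg),
      lintegral_const]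
  rw [L, R] at key
  by_contra hcon
  push_neg at hcon
  exact absurd key (not_le.mpr (ENNReal.add_lt_add hcon hcon))

/-- division trick in `ℝ≥0∞`. -/
lemma tilted_aux_div {a b D E : ℝ≥0∞} (hD0 : D ≠ 0) (hDt : D ≠ ⊤)
    (hE0 : E ≠ 0) (hEt : E ≠ ⊤) (h : a * E ≤ b * D) : D⁻¹ * a ≤ E⁻¹ * b := by
  calc D⁻¹ * a = D⁻¹ * E⁻¹ * (a * E) := by
        rw [mul_assoc, mul_comm a E, ← mul_assoc E⁻¹, ENNReal.inv_mul_cancel hE0 hEt, one_mul]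
    _ ≤ D⁻¹ * E⁻¹ * (b * D) := mul_le_mul_right h _
    _ = E⁻¹ * b * (D⁻¹ * D) := by ring
    _ = E⁻¹ * b := by rw [ENNReal.inv_mul_cancel hD0 hDt, mul_one]

/-- Uniform moment bound for exponentially tilted measures: for any `k > 0` and any
`lam` in an interval `[lamLo, lamHi]` on which the cumulant `Λ` is finite, the `k`-th
absolute moment of `ln r` under the `lam`-tilted measure is bounded by the sum of the
corresponding moments under the two endpoint tiltings. (Moments are taken as lower
integrals in `ℝ≥0∞` so that possibly infinite moments are handled faithfully.) -/
theorem tilted_moment_bound {α : Type*} [MeasurableSpace α]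
    (P : Measure α) [IsProbabilityMeasure P]
    (r : α → ℝ) (hr : Measurable r) (hr0 : ∀ x, 0 ≤ r x)
    (lamLo lamHi : ℝ) (hlo_hi : lamLo ≤ lamHi)
    (Λ : ℝ → ℝ)
    -- `Λ` is finite on `[lamLo, lamHi]` and equals the log-moment generating function
    (hint : ∀ l ∈ Set.Icc lamLo lamHi, IntegrableOn (fun x => r x ^ l) {x | 0 < r x} P)
    (hΛ : ∀ l ∈ Set.Icc lamLo lamHi,
      Real.exp (Λ l) = ∫ x in {x | 0 < r x}, r x ^ l ∂P)
    (Q : ℝ → Measure α)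
    (hQ : ∀ l, Q l = P.withDensity fun x =>
      ENNReal.ofReal (if 0 < r x then r x ^ l * Real.exp (-(Λ l)) else 0))
    (k : ℝ) (hk : 0 < k) :
    ∀ lam ∈ Set.Icc lamLo lamHi,
      ∫⁻ x, ENNReal.ofReal (|Real.log (r x)| ^ k) ∂(Q lam)
        ≤ ∫⁻ x, ENNReal.ofReal (|Real.log (r x)| ^ k) ∂(Q lamHi)
          + ∫⁻ x, ENNReal.ofReal (|Real.log (r x)| ^ k) ∂(Q lamLo) := by
  intro lam hlam
  have hS : MeasurableSet {x | 0 < r x} := measurableSet_lt measurable_const hr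
  -- the weight functions
  set w : ℝ → α → ℝ≥0∞ :=
    fun l x => ENNReal.ofReal (if 0 < r x then r x ^ l else 0) with hw_def
  have hw_meas : ∀ l, Measurable (w l) := by
    intro l
    apply Measurable.ennreal_ofReal
    exact Measurable.ite hS (by fun_prop) measurable_const
  -- the moment functions
  set F : α → ℝ≥0∞ := fun x => ENNReal.ofReal (|Real.log (r x)| ^ k) with hF_def
  set Fp : α → ℝ≥0∞ :=
    fun x => ENNReal.ofReal (if 1 ≤ r x then |Real.log (r x)| ^ k else 0) with hFp_def
  set Fm : α → ℝ≥0∞ :=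
    fun x => ENNReal.ofReal (if r x < 1 then |Real.log (r x)| ^ k else 0) with hFm_def
  have habs : Measurable fun x => |Real.log (r x)| := (Measurable.log hr).abs
  have habsk : Measurable fun x => |Real.log (r x)| ^ k := by fun_prop
  have hF_meas : Measurable F := habsk.ennreal_ofReal
  have hFp_meas : Measurable Fp := by
    apply Measurable.ennreal_ofReal
    exact Measurable.ite (measurableSet_le measurable_const hr) habsk measurable_const
  have hFm_meas : Measurable Fm := by
    apply Measurable.ennreal_ofReal
    exact Measurable.ite (measurableSet_lt hr measurable_const) habsk measurable_const
  -- pointwise splitting F = Fp + Fm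
  have hsplit : ∀ x, F x = Fp x + Fm x := by
    intro x
    by_cases h1 : 1 ≤ r x
    · simp [hF_def, hFp_def, hFm_def, h1, not_lt.mpr h1]
    · simp [hF_def, hFp_def, hFm_def, h1, not_le.mp h1]
  have hFpF : ∀ x, Fp x ≤ F x := by
    intro x; rw [hsplit x]; exact le_self_add
  have hFmF : ∀ x, Fm x ≤ F x := by
    intro x; rw [hsplit x]; exact le_add_self
  -- weights multiply
  have hwmul : ∀ l l' x, w l x * w l' x = w (l + l') x := by
    intro l l' x
    by_cases hx : 0 < r x
    · simp only [hw_def, if_pos hx]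
      rw [← ENNReal.ofReal_mul (Real.rpow_nonneg (hr0 x) l), ← Real.rpow_add hx]
    · simp [hw_def, if_neg hx]
  -- total masses
  have hwint : ∀ l ∈ Set.Icc lamLo lamHi,
      ∫⁻ x, w l x ∂P = ENNReal.ofReal (Real.exp (Λ l)) := by
    intro l hl
    have hind : ∀ x, w l x
        = Set.indicator {x | 0 < r x} (fun x => ENNReal.ofReal (r x ^ l)) x := by
      intro x
      by_cases hx : 0 < r x
      · simp [hw_def, Set.indicator, hx]
      · simp [hw_def, Set.indicator, hx]
    simp_rw [hind]
    rw [lintegral_indicator hS]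
    rw [hΛ l hl]
    exact (ofReal_integral_eq_lintegral_ofReal (hint l hl)
      (Filter.Eventually.of_forall fun x => Real.rpow_nonneg (hr0 x) l)).symm
  -- lintegral against Q l
  have hQint : ∀ l (G : α → ℝ≥0∞), Measurable G →
      ∫⁻ x, G x ∂(Q l)
        = ENNReal.ofReal (Real.exp (-(Λ l))) * ∫⁻ x, G x * w l x ∂P := by
    intro l G hG
    have hdens : Measurable fun x =>
        ENNReal.ofReal (if 0 < r x then r x ^ l * Real.exp (-(Λ l)) else 0) := by
      apply Measurable.ennreal_ofReal
      exact Measurable.ite hS (by fun_prop) measurable_const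
    rw [hQ l, lintegral_withDensity_eq_lintegral_mul _ hdens hG]
    have hpt : ∀ x,
        (fun x => ENNReal.ofReal (if 0 < r x then r x ^ l * Real.exp (-(Λ l)) else 0)) x * G x
        = ENNReal.ofReal (Real.exp (-(Λ l))) * (G x * w l x) := by
      intro x
      by_cases hx : 0 < r x
      · simp only [hw_def, if_pos hx]
        rw [mul_comm (r x ^ l), ENNReal.ofReal_mul (Real.exp_pos _).le]
        ring
      · simp [hw_def, if_neg hx]
    calc ∫⁻ x, ((fun x =>
          ENNReal.ofReal (if 0 < r x then r x ^ l * Real.exp (-(Λ l)) else 0)) * G) x ∂P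
        = ∫⁻ x, ENNReal.ofReal (Real.exp (-(Λ l))) * (G x * w l x) ∂P := by
          simp only [Pi.mul_apply]; simp_rw [hpt]
      _ = ENNReal.ofReal (Real.exp (-(Λ l))) * ∫⁻ x, G x * w l x ∂P :=
          lintegral_const_mul _ (hG.mul (hw_meas l))
  -- exp(-Λ) is the inverse of exp(Λ)
  have hinv : ∀ t : ℝ, ENNReal.ofReal (Real.exp (-t)) = (ENNReal.ofReal (Real.exp t))⁻¹ := by
    intro t
    rw [Real.exp_neg, ENNReal.ofReal_inv_of_pos (Real.exp_pos t)]
  have hE0 : ∀ t : ℝ, ENNReal.ofReal (Real.exp t) ≠ 0 :=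
    fun t => (ENNReal.ofReal_pos.mpr (Real.exp_pos t)).ne'
  have hEt : ∀ t : ℝ, ENNReal.ofReal (Real.exp t) ≠ ⊤ := fun t => ENNReal.ofReal_ne_top
  have hlamHi : lamHi ∈ Set.Icc lamLo lamHi := ⟨hlo_hi, le_refl _⟩
  have hlamLo : lamLo ∈ Set.Icc lamLo lamHi := ⟨le_refl _, hlo_hi⟩
  -- a.e. positivity under tilted base measures
  have hae : ∀ l, ∀ᵐ x ∂(P.withDensity (w l)), 0 < r x := by
    intro l
    rw [ae_iff]
    have : {x | ¬ 0 < r x} = {x | 0 < r x}ᶜ := rfl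
    have h0 : ∀ x, x ∈ {x | 0 < r x}ᶜ → w l x = 0 := by
      intro x hx
      have hx' : ¬ 0 < r x := by simpa using hx
      simp [hw_def, hx']
    rw [this, withDensity_apply _ hS.compl,
      setLIntegral_congr_fun hS.compl h0, lintegral_zero]
  -- monotonicity facts
  have hw_mono : ∀ (c : ℝ), 0 ≤ c → ∀ {x z : α}, r x ≤ r z → w c x ≤ w c z := by
    intro c hc x z hxz
    apply ENNReal.ofReal_le_ofReal
    by_cases hx : 0 < r x
    · rw [if_pos hx, if_pos (lt_of_lt_of_le hx hxz)]
      exact Real.rpow_le_rpow hx.le hxz hc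
    · rw [if_neg hx]
      by_cases hz : 0 < r z
      · rw [if_pos hz]; exact Real.rpow_nonneg (hr0 z) c
      · rw [if_neg hz]
  have hFp_mono : ∀ {x z : α}, r x ≤ r z → Fp x ≤ Fp z := by
    intro x z hxz
    apply ENNReal.ofReal_le_ofReal
    by_cases hx : 1 ≤ r x
    · rw [if_pos hx, if_pos (le_trans hx hxz)]
      have hlx : 0 ≤ Real.log (r x) := Real.log_nonneg hx
      have hlz : 0 ≤ Real.log (r z) := Real.log_nonneg (le_trans hx hxz)
      rw [abs_of_nonneg hlx, abs_of_nonneg hlz]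
      exact Real.rpow_le_rpow hlx (Real.log_le_log (lt_of_lt_of_le one_pos hx) hxz) hk.le
    · rw [if_neg hx]
      by_cases hz : 1 ≤ r z
      · rw [if_pos hz]; exact Real.rpow_nonneg (abs_nonneg _) k
      · rw [if_neg hz]
  have hFm_anti : ∀ {x z : α}, 0 < r x → r x ≤ r z → Fm z ≤ Fm x := by
    intro x z hx hxz
    apply ENNReal.ofReal_le_ofReal
    by_cases hz : r z < 1
    · rw [if_pos hz, if_pos (lt_of_le_of_lt hxz hz)]
      have hlx : Real.log (r x) ≤ 0 :=
        Real.log_nonpos (hr0 x) (le_of_lt (lt_of_le_of_lt hxz hz))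
      have hlz : Real.log (r z) ≤ 0 := Real.log_nonpos (hr0 z) hz.le
      rw [abs_of_nonpos hlx, abs_of_nonpos hlz]
      exact Real.rpow_le_rpow (neg_nonneg.mpr hlz)
        (neg_le_neg (Real.log_le_log hx hxz)) hk.le
    · rw [if_neg hz]
      by_cases hx1 : r x < 1
      · rw [if_pos hx1]; exact Real.rpow_nonneg (abs_nonneg _) k
      · rw [if_neg hx1]
  -- notation for the raw integrals
  set Ip : ℝ → ℝ≥0∞ := fun l => ∫⁻ x, Fp x * w l x ∂P with hIp_def
  set Im : ℝ → ℝ≥0∞ := fun l => ∫⁻ x, Fm x * w l x ∂P with hIm_def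
  set E : ℝ → ℝ≥0∞ := fun l => ENNReal.ofReal (Real.exp (Λ l)) with hE_def
  -- Chebyshev step (A): Ip lam * E lamHi ≤ Ip lamHi * E lam
  have stepA : Ip lam * E lamHi ≤ Ip lamHi * E lam := by
    have hc : (0:ℝ) ≤ lamHi - lam := sub_nonneg.mpr hlam.2
    have hcheb := tilted_aux_cheb (P.withDensity (w lam)) Fp (w (lamHi - lam))
      hFp_meas (hw_meas _) ?_
    · have e1 : ∫⁻ x, Fp x ∂(P.withDensity (w lam)) = Ip lam := by
        rw [lintegral_withDensity_eq_lintegral_mul _ (hw_meas lam) hFp_meas]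
        simp only [Pi.mul_apply]
        exact lintegral_congr fun x => mul_comm _ _
      have e2 : ∫⁻ x, w (lamHi - lam) x ∂(P.withDensity (w lam))
          = E lamHi := by
        rw [lintegral_withDensity_eq_lintegral_mul _ (hw_meas lam) (hw_meas _)]
        simp only [Pi.mul_apply]
        simp_rw [hwmul lam (lamHi - lam)]
        rw [show lam + (lamHi - lam) = lamHi by ring]
        exact hwint lamHi hlamHi
      have e3 : ∫⁻ x, Fp x * w (lamHi - lam) x ∂(P.withDensity (w lam))
          = Ip lamHi := by
        rw [lintegral_withDensity_eq_lintegral_mul _ (hw_meas lam) (g := fun x => Fp x * w (lamHi - lam) x) (hFp_meas.mul (hw_meas _))]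
        simp only [Pi.mul_apply]
        have : ∀ x, w lam x * (Fp x * w (lamHi - lam) x) = Fp x * w lamHi x := by
          intro x
          rw [show w lam x * (Fp x * w (lamHi - lam) x)
            = Fp x * (w lam x * w (lamHi - lam) x) by ring, hwmul,
            show lam + (lamHi - lam) = lamHi by ring]
        simp_rw [this]
        rfl
      have e4 : (P.withDensity (w lam)) Set.univ = E lam := by
        rw [withDensity_apply _ MeasurableSet.univ, Measure.restrict_univ]
        exact hwint lam hlam
      rw [e1, e2, e3, e4] at hcheb
      exact hcheb
    · filter_upwards [hae lam] with x hx
      filter_upwards [hae lam] with z hz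
      rcases le_total (r x) (r z) with hxz | hzx
      · exact tilted_aux_comb (hFp_mono hxz) (hw_mono _ hc hxz)
      · have h2 := tilted_aux_comb (hFp_mono hzx) (hw_mono _ hc hzx)
        calc Fp x * w (lamHi - lam) z + Fp z * w (lamHi - lam) x
            = Fp z * w (lamHi - lam) x + Fp x * w (lamHi - lam) z := add_comm _ _
          _ ≤ Fp z * w (lamHi - lam) z + Fp x * w (lamHi - lam) x := h2
          _ = Fp x * w (lamHi - lam) x + Fp z * w (lamHi - lam) z := add_comm _ _
  -- Chebyshev step (B): Im lam * E lamLo ≤ Im lamLo * E lam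
  have stepB : Im lam * E lamLo ≤ Im lamLo * E lam := by
    have hc : (0:ℝ) ≤ lam - lamLo := sub_nonneg.mpr hlam.1
    have hcheb := tilted_aux_cheb' (P.withDensity (w lamLo)) Fm (w (lam - lamLo))
      hFm_meas (hw_meas _) ?_
    · have e1 : ∫⁻ x, Fm x ∂(P.withDensity (w lamLo)) = Im lamLo := by
        rw [lintegral_withDensity_eq_lintegral_mul _ (hw_meas lamLo) hFm_meas]
        simp only [Pi.mul_apply]
        exact lintegral_congr fun x => mul_comm _ _
      have e2 : ∫⁻ x, w (lam - lamLo) x ∂(P.withDensity (w lamLo)) = E lam := by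
        rw [lintegral_withDensity_eq_lintegral_mul _ (hw_meas lamLo) (hw_meas _)]
        simp only [Pi.mul_apply]
        simp_rw [hwmul lamLo (lam - lamLo)]
        rw [show lamLo + (lam - lamLo) = lam by ring]
        exact hwint lam hlam
      have e3 : ∫⁻ x, Fm x * w (lam - lamLo) x ∂(P.withDensity (w lamLo)) = Im lam := by
        rw [lintegral_withDensity_eq_lintegral_mul _ (hw_meas lamLo)
          (g := fun x => Fm x * w (lam - lamLo) x) (hFm_meas.mul (hw_meas _))]
        simp only [Pi.mul_apply]
        have : ∀ x, w lamLo x * (Fm x * w (lam - lamLo) x) = Fm x * w lam x := by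
          intro x
          rw [show w lamLo x * (Fm x * w (lam - lamLo) x)
            = Fm x * (w lamLo x * w (lam - lamLo) x) by ring, hwmul,
            show lamLo + (lam - lamLo) = lam by ring]
        simp_rw [this]
        rfl
      have e4 : (P.withDensity (w lamLo)) Set.univ = E lamLo := by
        rw [withDensity_apply _ MeasurableSet.univ, Measure.restrict_univ]
        exact hwint lamLo hlamLo
      rw [e1, e2, e3, e4] at hcheb
      exact hcheb
    · filter_upwards [hae lamLo] with x hx
      filter_upwards [hae lamLo] with z hz
      rcases le_total (r x) (r z) with hxz | hzx
      · have h2 := tilted_aux_comb (hFm_anti hx hxz) (hw_mono _ hc hxz)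
        calc Fm x * w (lam - lamLo) x + Fm z * w (lam - lamLo) z
            = Fm z * w (lam - lamLo) z + Fm x * w (lam - lamLo) x := add_comm _ _
          _ ≤ Fm z * w (lam - lamLo) x + Fm x * w (lam - lamLo) z := h2
          _ = Fm x * w (lam - lamLo) z + Fm z * w (lam - lamLo) x := add_comm _ _
      · exact tilted_aux_comb (hFm_anti hz hzx) (hw_mono _ hc hzx)
  -- put everything together
  have hQlam : ∫⁻ x, F x ∂(Q lam) = (E lam)⁻¹ * Ip lam + (E lam)⁻¹ * Im lam := by
    rw [hQint lam F hF_meas, hinv]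
    have : ∀ x, F x * w lam x = Fp x * w lam x + Fm x * w lam x := by
      intro x; rw [hsplit x, add_mul]
    simp_rw [this]
    rw [lintegral_add_left (f := fun x => Fp x * w lam x) (hFp_meas.mul (hw_meas lam))]
    rw [mul_add]
  have hA : (E lam)⁻¹ * Ip lam ≤ ∫⁻ x, F x ∂(Q lamHi) := by
    have h1 : (E lam)⁻¹ * Ip lam ≤ (E lamHi)⁻¹ * Ip lamHi :=
      tilted_aux_div (hE0 _) (hEt _) (hE0 _) (hEt _) stepA
    refine le_trans h1 ?_
    rw [hQint lamHi F hF_meas, hinv]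
    exact mul_le_mul_right (lintegral_mono fun x => mul_le_mul_left (hFpF x) _) _
  have hB : (E lam)⁻¹ * Im lam ≤ ∫⁻ x, F x ∂(Q lamLo) := by
    have h1 : (E lam)⁻¹ * Im lam ≤ (E lamLo)⁻¹ * Im lamLo :=
      tilted_aux_div (hE0 _) (hEt _) (hE0 _) (hEt _) stepB
    refine le_trans h1 ?_
    rw [hQint lamLo F hF_meas, hinv]
    exact mul_le_mul_right (lintegral_mono fun x => mul_le_mul_left (hFmF x) _) _
  calc ∫⁻ x, F x ∂(Q lam) = (E lam)⁻¹ * Ip lam + (E lam)⁻¹ * Im lam := hQlam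
    _ ≤ ∫⁻ x, F x ∂(Q lamHi) + ∫⁻ x, F x ∂(Q lamLo) := add_le_add hA hB
end

section
/- Let P, Q be probability measures with Q ≪ P, r = dQ/dP, and width functions w_P(h) = P{r ≥ h}, w_Q(h) = Q{r ≥ h}. Then for every h₀ > 0, w_P(h₀) = ∫_{[h₀, ∞)} (1/h) d(-w_Q)(h), i.e., the P-width can be recovered from the Q-width by the Stieltjes integral w_P(h₀) = -∫_{h₀}^∞ (1/h) dw_Q(h). -/
open MeasureTheory

/-- The `P`-width function can be recovered from the `Q`-width function: for `Q ≪ P`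
with `r = dQ/dP`, and every `h₀ > 0`,
`w_P(h₀) = P{r ≥ h₀} = ∫_{[h₀,∞)} (1/h) dμ(h)`, where `μ = Q ∘ r⁻¹` is the law of `r`
under `Q`, i.e. the Stieltjes measure `-dw_Q`. -/
theorem width_P_from_width_Q {α : Type*} [MeasurableSpace α]
    (P Q : Measure α) [IsProbabilityMeasure P] [IsProbabilityMeasure Q]
    (hQP : Q ≪ P)
    (r : α → ℝ) (hr : r = fun x => (Q.rnDeriv P x).toReal) :
    ∀ h₀ : ℝ, 0 < h₀ →
      P {x | h₀ ≤ r x} = ∫⁻ h in Set.Ici h₀, ENNReal.ofReal (1 / h) ∂(Q.map r) := by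
  intro h₀ hh₀
  have hrm : Measurable r := by
    rw [hr]; exact (Measure.measurable_rnDeriv Q P).ennreal_toReal
  have hs : MeasurableSet {x | h₀ ≤ r x} := measurableSet_le measurable_const hrm
  have hfm : Measurable fun h : ℝ => ENNReal.ofReal (1 / h) :=
    (measurable_const.div measurable_id).ennreal_ofReal
  rw [MeasureTheory.setLIntegral_map measurableSet_Ici hfm hrm]
  have hpre : r ⁻¹' Set.Ici h₀ = {x | h₀ ≤ r x} := rfl
  have hQ : P.withDensity (Q.rnDeriv P) = Q := Measure.withDensity_rnDeriv_eq Q P hQP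
  rw [hpre, ← hQ, restrict_withDensity hs,
    lintegral_withDensity_eq_lintegral_mul _ (Measure.measurable_rnDeriv Q P) (g := fun x => ENNReal.ofReal (1 / r x)) ((measurable_const.div hrm).ennreal_ofReal),
    ← setLIntegral_one]
  refine setLIntegral_congr_fun_ae hs ?_
  filter_upwards [Measure.rnDeriv_ne_top Q P] with x hx hxs
  have hrx : h₀ ≤ r x := hxs
  have hrpos : 0 < r x := lt_of_lt_of_le hh₀ hrx
  have : Q.rnDeriv P x = ENNReal.ofReal (r x) := by
    rw [hr]; exact (ENNReal.ofReal_toReal hx).symm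
  simp only [Pi.mul_apply, Function.comp_apply, this]
  rw [← ENNReal.ofReal_mul hrpos.le, mul_one_div, div_self hrpos.ne', ENNReal.ofReal_one]
end
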